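/- arXiv:1708.04267 — 4 statements merged into one kernel-verified Lean document; each statement's English description precedes it below -/
import Mathlib

section
/- Every infinite set A ⊆ ℕ that is weakly computably traceable has upper density 1 under some computable sampling: there exists a computable injection g : ℕ → ℕ such that limsup_{n→∞} ρ_n(g⁻¹(A)) = 1. In particular, A has absolute upper density 1. -/
open Filter

/-- Partial density `ρ_n(S) = |S ∩ [0,n)| / n` (as a real number). -/
noncomputable def pden (S : Set ℕ) (n : ℕ) : ℝ := ((S ∩ Set.Iio n).ncard : ℝ) / n

/-- Partial functions `ℕ →. ℕ` computable relative to an oracle `O : ℕ → ℕ`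
(oracle version of `Nat.Partrec`). -/
inductive OracleRecursiveIn (O : ℕ → ℕ) : (ℕ →. ℕ) → Prop
  | zero : OracleRecursiveIn O (pure 0)
  | succ : OracleRecursiveIn O ↑Nat.succ
  | left : OracleRecursiveIn O ↑fun n : ℕ => n.unpair.1
  | right : OracleRecursiveIn O ↑fun n : ℕ => n.unpair.2
  | oracle : OracleRecursiveIn O ↑O
  | pair {f g} : OracleRecursiveIn O f → OracleRecursiveIn O g →
      OracleRecursiveIn O fun n => Nat.pair <$> f n <*> g n
  | comp {f g} : OracleRecursiveIn O f → OracleRecursiveIn O g →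
      OracleRecursiveIn O fun n => g n >>= f
  | prec {f g} : OracleRecursiveIn O f → OracleRecursiveIn O g →
      OracleRecursiveIn O (Nat.unpaired fun a n =>
        n.rec (f a) fun y IH => do let i ← IH; g (Nat.pair a (Nat.pair y i)))
  | rfind {f} : OracleRecursiveIn O f →
      OracleRecursiveIn O fun a => Nat.rfind fun n => (fun m => m = 0) <$> f (Nat.pair a n)

open Classical in
/-- Characteristic function of a set of naturals. -/
noncomputable def chi (A : Set ℕ) : ℕ → ℕ := fun n => if n ∈ A then 1 else 0

/-- `f ≤_T A`: the function `f` is computable relative to the set `A`. -/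
def FunLeT (f : ℕ → ℕ) (A : Set ℕ) : Prop := OracleRecursiveIn (chi A) ↑f

/-- `S ≤_T A`: the set `S` is computable relative to the set `A` (Turing reducibility). -/
def SetLeT (S A : Set ℕ) : Prop := OracleRecursiveIn (chi A) ↑(chi S)

/-- `S ≡_T A`: Turing equivalence of sets. -/
def SetEquivT (S A : Set ℕ) : Prop := SetLeT S A ∧ SetLeT A S

/-- `S` has intrinsic density 0: every computable injection samples `S` with density 0. -/
def ID0 (S : Set ℕ) : Prop :=
  ∀ p : ℕ → ℕ, Computable p → Function.Injective p →
    Tendsto (fun n => pden (p ⁻¹' S) n) atTop (nhds 0)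

/-- `S` has intrinsic lower density 0. -/
def ILD0 (S : Set ℕ) : Prop :=
  ∀ p : ℕ → ℕ, Computable p → Function.Injective p →
    liminf (fun n => pden (p ⁻¹' S) n) atTop = 0

/-- `A` is weakly computably traceable. -/
def WCT (A : Set ℕ) : Prop :=
  ∃ h : ℕ → ℕ, Computable h ∧ ∀ f : ℕ → ℕ, FunLeT f A →
    ∃ V : ℕ → Finset ℕ, Computable V ∧ (∀ n, (V n).card ≤ h n) ∧
      ∃ᶠ n in atTop, f n ∈ V n

/-- `g` dominates every computable function. -/
def Dominant (g : ℕ → ℕ) : Prop :=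
  ∀ f : ℕ → ℕ, Computable f → ∀ᶠ n in atTop, f n < g n

/-- `f` is diagonally non-computable. -/
def DNC (f : ℕ → ℕ) : Prop :=
  ∀ e : ℕ, ∀ y ∈ (Denumerable.ofNat Nat.Partrec.Code e).eval e, f e ≠ y

/-- Absolute upper density of `S`: the supremum over computable injections `p`
of `limsup_n ρ_n(p⁻¹(S))`. -/
noncomputable def AUD (S : Set ℕ) : ℝ :=
  sSup {x : ℝ | ∃ p : ℕ → ℕ, Computable p ∧ Function.Injective p ∧
    x = limsup (fun n => pden (p ⁻¹' S) n) atTop}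


section PartA
variable {O : ℕ → ℕ}

theorem recIn_of_eq {f g : ℕ →. ℕ} (hf : OracleRecursiveIn O f) (H : ∀ n, f n = g n) :
    OracleRecursiveIn O g := (funext H : f = g) ▸ hf

theorem recIn_of_partrec {f : ℕ →. ℕ} (hf : Nat.Partrec f) : OracleRecursiveIn O f := by
  induction hf with
  | zero => exact .zero
  | succ => exact .succ
  | left => exact .left
  | right => exact .right
  | pair _ _ ih₁ ih₂ => exact .pair ih₁ ih₂
  | comp _ _ ih₁ ih₂ => exact .comp ih₁ ih₂
  | prec _ _ ih₁ ih₂ => exact .prec ih₁ ih₂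
  | rfind _ ih => exact .rfind ih

theorem recIn_of_computable {f : ℕ → ℕ} (hf : Computable f) : OracleRecursiveIn O ↑f :=
  recIn_of_partrec (Partrec.nat_iff.1 hf)

theorem recIn_totalComp {f g : ℕ → ℕ} (hf : OracleRecursiveIn O ↑f) (hg : OracleRecursiveIn O ↑g) :
    OracleRecursiveIn O ↑(fun n => f (g n)) :=
  recIn_of_eq (.comp hf hg) (by intro n; simp [PFun.coe_val]; exact Part.bind_some _ _)

theorem recIn_totalPair {f g : ℕ → ℕ} (hf : OracleRecursiveIn O ↑f) (hg : OracleRecursiveIn O ↑g) :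
    OracleRecursiveIn O ↑(fun n => Nat.pair (f n) (g n)) :=
  recIn_of_eq (.pair hf hg) (by intro n; simp [PFun.coe_val, Seq.seq])

theorem recIn_oraclePattern {H : ℕ → ℕ → ℕ} {u : ℕ → ℕ} (hH : Computable₂ H)
    (hu : Computable u) : OracleRecursiveIn O ↑(fun x => H x (O (u x))) := by
  have h1 : OracleRecursiveIn O ↑(fun x => O (u x)) :=
    recIn_totalComp .oracle (recIn_of_computable hu)
  have h2 : OracleRecursiveIn O ↑(fun x : ℕ => Nat.pair x (O (u x))) :=
    recIn_totalPair (recIn_of_computable Computable.id) h1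
  have h3 : Computable (fun y : ℕ => H y.unpair.1 y.unpair.2) :=
    hH.comp (Computable.fst.comp Computable.unpair) (Computable.snd.comp Computable.unpair)
  exact recIn_of_eq (recIn_totalComp (recIn_of_computable h3) h2) (by intro n; simp)

end PartA


section PartA2
variable {O : ℕ → ℕ}

theorem recIn_pattern {q : ℕ → ℕ} (hq : OracleRecursiveIn O ↑q) {H : ℕ → ℕ → ℕ} {u : ℕ → ℕ}
    (hH : Computable₂ H) (hu : Computable u) :
    OracleRecursiveIn O ↑(fun x => H x (q (u x))) := by
  have h1 : OracleRecursiveIn O ↑(fun x => q (u x)) := recIn_totalComp hq (recIn_of_computable hu)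
  have h2 : OracleRecursiveIn O ↑(fun x : ℕ => Nat.pair x (q (u x))) :=
    recIn_totalPair (recIn_of_computable Computable.id) h1
  have h3 : Computable (fun y : ℕ => H y.unpair.1 y.unpair.2) :=
    hH.comp (Computable.fst.comp Computable.unpair) (Computable.snd.comp Computable.unpair)
  exact recIn_of_eq (recIn_totalComp (recIn_of_computable h3) h2) (by intro n; simp)

theorem recIn_natRec {s : ℕ → ℕ → ℕ}
    (hs : OracleRecursiveIn O ↑(fun x : ℕ => s x.unpair.2.unpair.1 x.unpair.2.unpair.2))
    {r : ℕ → ℕ} (h0 : r 0 = 0) (hr : ∀ m, r (m + 1) = s m (r m)) :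
    OracleRecursiveIn O ↑r := by
  have hprec := OracleRecursiveIn.prec (OracleRecursiveIn.zero (O := O)) hs
  have hpair : Computable (fun m : ℕ => Nat.pair 0 m) :=
    Primrec.to_comp (Primrec₂.natPair.comp (Primrec.const 0) Primrec.id)
  refine recIn_of_eq (OracleRecursiveIn.comp hprec (recIn_of_computable hpair)) ?_
  intro m
  have key : ∀ m : ℕ, (Nat.rec (Part.some 0)
      (fun y IH => IH.bind fun i => Part.some (s y i)) m : Part ℕ) = Part.some (r m) := by
    intro m
    induction m with
    | zero =>
      show Part.some 0 = Part.some (r 0)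
      rw [h0]
    | succ m ih =>
      show (Nat.rec (Part.some 0) (fun y IH => IH.bind fun i => Part.some (s y i)) m :
        Part ℕ).bind (fun i => Part.some (s m i)) = Part.some (r (m + 1))
      rw [ih, Part.bind_some, hr m]
  have hpure : (pure 0 : ℕ →. ℕ) 0 = Part.some 0 := rfl
  simp only [PFun.coe_val, Part.bind_eq_bind, Part.bind_some, Nat.unpaired, Nat.unpair_pair,
    hpure, key m]

theorem recIn_find {w : ℕ → ℕ} (hw : OracleRecursiveIn O ↑w)
    (hex : ∀ k, ∃ n, w (Nat.pair k n) = 0) :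
    OracleRecursiveIn O ↑(fun k => Nat.find (hex k)) := by
  refine recIn_of_eq (OracleRecursiveIn.rfind hw) ?_
  intro k
  apply Part.eq_some_iff.2
  apply Nat.mem_rfind.2
  constructor
  · simp [PFun.coe_val, Nat.find_spec (hex k)]
  · intro m hm
    simpa [PFun.coe_val] using Nat.find_min (hex k) hm

end PartA2


section PartA3

/-- Count of oracle-ones below `m`. -/
def cntO (O : ℕ → ℕ) : ℕ → ℕ := fun m => Nat.rec 0 (fun k ih => ih + O k) m

/-- Bitmask of the oracle below `m`. -/
def eO (O : ℕ → ℕ) : ℕ → ℕ := fun m => Nat.rec 0 (fun k ih => ih + O k * 2 ^ k) m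

/-- Decoding of a bitmask into the (sorted) list of its bits. -/
def Dl (v : ℕ) : List ℕ := (List.range v).filter (fun i => decide (v / 2 ^ i % 2 = 1))

variable {O : ℕ → ℕ}

theorem cntO_succ (m : ℕ) : cntO O (m + 1) = cntO O m + O m := rfl
theorem eO_succ (m : ℕ) : eO O (m + 1) = eO O m + O m * 2 ^ m := rfl

theorem recIn_cntO : OracleRecursiveIn O ↑(cntO O) := by
  have pu2 : Primrec (fun x : ℕ => x.unpair.2) := Primrec.snd.comp Primrec.unpair
  have pu22 : Primrec (fun x : ℕ => x.unpair.2.unpair.2) :=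
    Primrec.snd.comp (Primrec.unpair.comp pu2)
  have hH : Computable₂ (fun (x b : ℕ) => x.unpair.2.unpair.2 + b) :=
    Primrec₂.to_comp (Primrec.nat_add.comp (pu22.comp Primrec.fst) Primrec.snd)
  have hu : Computable (fun x : ℕ => x.unpair.2.unpair.1) :=
    Primrec.to_comp (Primrec.fst.comp (Primrec.unpair.comp pu2))
  exact recIn_natRec (s := fun k acc => acc + O k)
    (recIn_pattern OracleRecursiveIn.oracle hH hu) rfl (fun m => rfl)

theorem recIn_eO : OracleRecursiveIn O ↑(eO O) := by
  have pu2 : Primrec (fun x : ℕ => x.unpair.2) := Primrec.snd.comp Primrec.unpair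
  have pu21 : Primrec (fun x : ℕ => x.unpair.2.unpair.1) :=
    Primrec.fst.comp (Primrec.unpair.comp pu2)
  have pu22 : Primrec (fun x : ℕ => x.unpair.2.unpair.2) :=
    Primrec.snd.comp (Primrec.unpair.comp pu2)
  have hpow : Primrec₂ (fun a b : ℕ => a ^ b) := Primrec₂.unpaired'.1 Nat.Primrec.pow
  have hH : Computable₂ (fun (x b : ℕ) => x.unpair.2.unpair.2 + b * 2 ^ x.unpair.2.unpair.1) :=
    Primrec₂.to_comp (Primrec.nat_add.comp (pu22.comp Primrec.fst)
      (Primrec.nat_mul.comp Primrec.snd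
        (hpow.comp (Primrec.const 2) (pu21.comp Primrec.fst))))
  have hu : Computable (fun x : ℕ => x.unpair.2.unpair.1) := Primrec.to_comp pu21
  exact recIn_natRec (s := fun k acc => acc + O k * 2 ^ k)
    (recIn_pattern OracleRecursiveIn.oracle hH hu) rfl (fun m => rfl)

variable {A : Set ℕ}

theorem chi_le_one (A : Set ℕ) (n : ℕ) : chi A n ≤ 1 := by
  unfold chi; split <;> simp

theorem chi_eq_one_iff {n : ℕ} : chi A n = 1 ↔ n ∈ A := by
  unfold chi; split <;> simp_all

theorem cntO_mono : Monotone (cntO (chi A)) :=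
  monotone_nat_of_le_succ (fun m => by rw [cntO_succ]; omega)

theorem cntO_le_succ (m : ℕ) : cntO (chi A) (m + 1) ≤ cntO (chi A) m + 1 := by
  have := chi_le_one A m; rw [cntO_succ]; omega

open Classical in
theorem cntO_eq_card (m : ℕ) :
    cntO (chi A) m = ((Finset.range m).filter (fun x => x ∈ A)).card := by
  induction m with
  | zero => rfl
  | succ m ih =>
    rw [cntO_succ, ih, Finset.range_add_one, Finset.filter_insert]
    by_cases hm : m ∈ A
    · rw [if_pos hm, Finset.card_insert_of_notMem (by simp), chi_eq_one_iff.2 hm]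
    · rw [if_neg hm]
      have : chi A m = 0 := by unfold chi; simp [hm]
      omega

theorem cntO_unbounded (hinf : A.Infinite) (v : ℕ) : ∃ m, v ≤ cntO (chi A) m := by
  classical
  obtain ⟨t, hts, htc⟩ := hinf.exists_subset_card_eq v
  obtain ⟨n, hn⟩ := Finset.exists_nat_subset_range t
  refine ⟨n, ?_⟩
  rw [cntO_eq_card]
  calc v = t.card := htc.symm
    _ ≤ _ := Finset.card_le_card (fun x hx => by
        simp only [Finset.mem_filter]
        exact ⟨hn hx, hts hx⟩)

theorem cntO_exact (hinf : A.Infinite) (v : ℕ) : ∃ m, cntO (chi A) m = v := by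
  have hex := cntO_unbounded hinf v
  refine ⟨Nat.find hex, ?_⟩
  have hspec := Nat.find_spec hex
  cases hn : Nat.find hex with
  | zero =>
    rw [hn] at hspec
    have h0 : cntO (chi A) 0 = 0 := rfl
    omega
  | succ k =>
    have hlt : ¬ v ≤ cntO (chi A) k := Nat.find_min hex (by omega)
    have h2 := cntO_le_succ (A := A) k
    rw [hn] at hspec
    omega

theorem eO_lt (m : ℕ) : eO (chi A) m < 2 ^ m := by
  induction m with
  | zero => simp [eO]
  | succ m ih =>
    have := chi_le_one A m
    rw [eO_succ, pow_succ]
    nlinarith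

theorem eO_bit {j m : ℕ} (hj : j < m) : eO (chi A) m / 2 ^ j % 2 = chi A j := by
  induction m with
  | zero => omega
  | succ m ih =>
    rw [eO_succ]
    rcases Nat.lt_or_ge j m with hjm | hjm
    · have h1 : (2 : ℕ) ^ m = 2 ^ (m - j) * 2 ^ j := by
        rw [← pow_add]; congr 1; omega
      have h2 : chi A m * 2 ^ m = chi A m * 2 ^ (m - j) * 2 ^ j := by rw [h1]; ring
      rw [h2, Nat.add_mul_div_right _ _ (Nat.pow_pos (n := j) (by norm_num))]
      have h3 : chi A m * 2 ^ (m - j) = chi A m * 2 ^ (m - j - 1) * 2 := by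
        have : (2:ℕ) ^ (m - j) = 2 ^ (m - j - 1) * 2 := by
          rw [← pow_succ]; congr 1; omega
        rw [this]; ring
      rw [h3, Nat.add_mul_mod_self_right]
      exact ih hjm
    · have hjm' : j = m := by omega
      subst hjm'
      rw [Nat.add_mul_div_right _ _ (Nat.pow_pos (n := j) (by norm_num)),
        Nat.div_eq_of_lt (eO_lt j), Nat.zero_add]
      exact Nat.mod_eq_of_lt (by have := chi_le_one A j; omega)

theorem eO_bit_high {j m : ℕ} (hj : m ≤ j) : eO (chi A) m / 2 ^ j = 0 :=
  Nat.div_eq_of_lt (lt_of_lt_of_le (eO_lt m) (Nat.pow_le_pow_right (by norm_num) hj))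

theorem mem_Dl_eO {x m : ℕ} : x ∈ Dl (eO (chi A) m) ↔ x ∈ A ∧ x < m := by
  simp only [Dl, List.mem_filter, List.mem_range, decide_eq_true_eq]
  constructor
  · rintro ⟨hlt, hbit⟩
    rcases Nat.lt_or_ge x m with hxm | hxm
    · rw [eO_bit hxm] at hbit
      exact ⟨chi_eq_one_iff.1 hbit, hxm⟩
    · rw [eO_bit_high hxm] at hbit; simp at hbit
  · rintro ⟨hA, hxm⟩
    have hbit : eO (chi A) m / 2 ^ x % 2 = 1 := by rw [eO_bit hxm, chi_eq_one_iff.2 hA]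
    refine ⟨?_, hbit⟩
    have h1 : 0 < eO (chi A) m / 2 ^ x := by
      rcases Nat.eq_zero_or_pos (eO (chi A) m / 2 ^ x) with h | h
      · rw [h] at hbit; simp at hbit
      · exact h
    have h2 : 2 ^ x ≤ eO (chi A) m := by
      by_contra hcon
      rw [Nat.div_eq_of_lt (by omega)] at h1; omega
    exact lt_of_lt_of_le (Nat.lt_two_pow_self) h2

theorem Dl_nodup (v : ℕ) : (Dl v).Nodup :=
  List.nodup_range.filter _

theorem Dl_sorted (v : ℕ) : List.Pairwise (· < ·) (Dl v) :=
  List.Pairwise.sublist List.filter_sublist List.pairwise_lt_range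

open Classical in
theorem Dl_eO_eq (m : ℕ) :
    Dl (eO (chi A) m) = (List.range m).filter (fun x => decide (x ∈ A)) := by
  classical
  apply List.Perm.eq_of_pairwise' (r := (· < ·)) (Dl_sorted _)
    (List.Pairwise.sublist List.filter_sublist List.pairwise_lt_range) ?_
  rw [List.perm_ext_iff_of_nodup (Dl_nodup _) (List.nodup_range.filter _)]
  intro a
  rw [mem_Dl_eO]
  simp only [List.mem_filter, List.mem_range, decide_eq_true_eq]
  exact and_comm

open Classical in
theorem Dl_eO_length (m : ℕ) : (Dl (eO (chi A) m)).length = cntO (chi A) m := by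
  classical
  rw [Dl_eO_eq]
  induction m with
  | zero => rfl
  | succ m ih =>
    rw [List.range_succ, List.filter_append, List.length_append, ih, cntO_succ]
    by_cases hm : m ∈ A
    · simp [hm, chi_eq_one_iff.2 hm]
    · have : chi A m = 0 := by unfold chi; simp [hm]
      simp [hm, this]

end PartA3


section PartA4

theorem nat_find_eq {p q : ℕ → Prop} [DecidablePred p] [DecidablePred q]
    (hp : ∃ n, p n) (hq : ∃ n, q n) (H : ∀ n, p n ↔ q n) : Nat.find hp = Nat.find hq :=
  le_antisymm (Nat.find_le ((H _).2 (Nat.find_spec hq))) (Nat.find_le ((H _).1 (Nat.find_spec hp)))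

/-- History (total enumerated length) bound before stage `p`. -/
def HistF (h : ℕ → ℕ) : ℕ → ℕ := fun p => Nat.rec 0
  (fun q ih => ih + (h q + 1) * ((q + 2) ^ (h q) * ((q + 1) * (ih + 2 * h q + 1)) + 1)) p

/-- Base unit size at stage `p`. -/
def uF (h : ℕ → ℕ) (p : ℕ) : ℕ := (p + 1) * (HistF h p + 2 * h p + 1)

/-- Target size of the traced set at stage `p`. -/
def cF (h : ℕ → ℕ) (p : ℕ) : ℕ := (p + 2) ^ (h p) * uF h p

/-- Truncation size of candidate `i` at stage `p`. -/
def tF (h : ℕ → ℕ) (p i : ℕ) : ℕ := (p + 2) ^ i * uF h p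

theorem HistF_succ (h : ℕ → ℕ) (p : ℕ) :
    HistF h (p + 1) = HistF h p + (h p + 1) * (cF h p + 1) := rfl

theorem one_le_uF (h : ℕ → ℕ) (p : ℕ) : 1 ≤ uF h p := by
  have : 0 < (p + 1) * (HistF h p + 2 * h p + 1) := Nat.mul_pos (by omega) (by omega)
  unfold uF; omega

theorem tF_le_cF (h : ℕ → ℕ) {p i : ℕ} (hi : i ≤ h p) : tF h p i ≤ cF h p :=
  Nat.mul_le_mul_right _ (Nat.pow_le_pow_right (by omega) hi)

theorem uF_le_tF (h : ℕ → ℕ) (p i : ℕ) : uF h p ≤ tF h p i := by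
  have : 1 ≤ (p + 2) ^ i := Nat.one_le_pow _ _ (by omega)
  calc uF h p = 1 * uF h p := (one_mul _).symm
    _ ≤ tF h p i := Nat.mul_le_mul_right _ this

theorem computable_HistF {h : ℕ → ℕ} (hc : Computable h) : Computable (HistF h) := by
  have hpow : Computable₂ (fun a b : ℕ => a ^ b) := (Primrec₂.unpaired'.1 Nat.Primrec.pow).to_comp
  have hadd : Computable₂ (fun a b : ℕ => a + b) := Primrec.nat_add.to_comp
  have hmul : Computable₂ (fun a b : ℕ => a * b) := Primrec.nat_mul.to_comp
  have hstep : Computable₂ (fun (_ : ℕ) (q : ℕ × ℕ) => q.2 + (h q.1 + 1) *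
      ((q.1 + 2) ^ (h q.1) * ((q.1 + 1) * (q.2 + 2 * h q.1 + 1)) + 1)) := by
    have h1 : Computable (fun q : ℕ × ℕ => h q.1) := hc.comp Computable.fst
    have h2 : Computable (fun q : ℕ × ℕ => q.2) := Computable.snd
    have h3 : Computable (fun q : ℕ × ℕ => q.1) := Computable.fst
    have hbig : Computable (fun q : ℕ × ℕ => q.2 + (h q.1 + 1) *
        ((q.1 + 2) ^ (h q.1) * ((q.1 + 1) * (q.2 + 2 * h q.1 + 1)) + 1)) := by
      apply hadd.comp h2
      apply hmul.comp (hadd.comp h1 (Computable.const 1))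
      apply hadd.comp ?_ (Computable.const 1)
      apply hmul.comp (hpow.comp (hadd.comp h3 (Computable.const 2)) h1)
      apply hmul.comp (hadd.comp h3 (Computable.const 1))
      apply hadd.comp (hadd.comp h2 (hmul.comp (Computable.const 2) h1)) (Computable.const 1)
    exact hbig.comp Computable.snd
  have := Computable.nat_rec Computable.id (Computable.const 0) hstep
  exact this.of_eq (fun p => by simp [HistF])

theorem computable_uF {h : ℕ → ℕ} (hc : Computable h) : Computable (uF h) := by
  have hadd : Computable₂ (fun a b : ℕ => a + b) := Primrec.nat_add.to_comp
  have hmul : Computable₂ (fun a b : ℕ => a * b) := Primrec.nat_mul.to_comp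
  exact hmul.comp (hadd.comp Computable.id (Computable.const 1))
    (hadd.comp (hadd.comp (computable_HistF hc)
      (hmul.comp (Computable.const 2) hc)) (Computable.const 1))

theorem computable_cF {h : ℕ → ℕ} (hc : Computable h) : Computable (cF h) := by
  have hpow : Computable₂ (fun a b : ℕ => a ^ b) := (Primrec₂.unpaired'.1 Nat.Primrec.pow).to_comp
  have hadd : Computable₂ (fun a b : ℕ => a + b) := Primrec.nat_add.to_comp
  have hmul : Computable₂ (fun a b : ℕ => a * b) := Primrec.nat_mul.to_comp
  exact hmul.comp (hpow.comp (hadd.comp Computable.id (Computable.const 2)) hc)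
    (computable_uF hc)

variable {A : Set ℕ}

/-- Position witnessing that `A` has exactly `cF h k` elements below it. -/
noncomputable def aF (hinf : A.Infinite) (h : ℕ → ℕ) (k : ℕ) : ℕ :=
  Nat.find (cntO_exact hinf (cF h k))

/-- The function traced by the weak trace: bitmask of an initial segment of `A`
of size exactly `cF h k`. -/
noncomputable def fT (hinf : A.Infinite) (h : ℕ → ℕ) (k : ℕ) : ℕ :=
  eO (chi A) (aF hinf h k)

theorem cnt_aF (hinf : A.Infinite) (h : ℕ → ℕ) (k : ℕ) :
    cntO (chi A) (aF hinf h k) = cF h k := Nat.find_spec (cntO_exact hinf (cF h k))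

theorem funleT_fT (hinf : A.Infinite) {h : ℕ → ℕ} (hc : Computable h) :
    FunLeT (fT hinf h) A := by
  set w : ℕ → ℕ := fun x =>
    if cntO (chi A) x.unpair.2 = cF h x.unpair.1 then 0 else 1 with hw_def
  have hH : Computable₂ (fun (x b : ℕ) => if b = cF h x.unpair.1 then 0 else 1) := by
    have heq : Computable₂ (fun a b : ℕ => decide (a = b)) := Primrec.eq.decide.to_comp
    have hc1 : Computable (fun q : ℕ × ℕ => decide (q.2 = cF h q.1.unpair.1)) :=
      heq.comp Computable.snd
        ((computable_cF hc).comp ((Primrec.fst.comp Primrec.unpair).to_comp.comp Computable.fst))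
    have := Computable.cond hc1 (Computable.const 0) (Computable.const 1)
    exact this.of_eq (fun q => by by_cases hq : q.2 = cF h q.1.unpair.1 <;> simp [hq])
  have hu : Computable (fun x : ℕ => x.unpair.2) := (Primrec.snd.comp Primrec.unpair).to_comp
  have hw : OracleRecursiveIn (chi A) ↑w :=
    recIn_pattern recIn_cntO (H := fun x b => if b = cF h x.unpair.1 then 0 else 1) hH hu
  have hex : ∀ k, ∃ n, w (Nat.pair k n) = 0 := by
    intro k
    obtain ⟨m, hm⟩ := cntO_exact hinf (cF h k)
    exact ⟨m, by simp [hw_def, Nat.unpair_pair, hm]⟩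
  have hfind := recIn_find hw hex
  have haF : ∀ k, Nat.find (hex k) = aF hinf h k := by
    intro k
    apply nat_find_eq
    intro n
    simp only [hw_def, Nat.unpair_pair]
    constructor
    · intro hn
      by_contra hcon
      rw [if_neg hcon] at hn
      omega
    · intro hn; rw [if_pos hn]
  have hfa : OracleRecursiveIn (chi A) ↑(aF hinf h) := by
    refine recIn_of_eq hfind (fun k => ?_)
    rw [show (fun k => Nat.find (hex k)) = aF hinf h from funext haF]
  exact recIn_of_eq (recIn_totalComp recIn_eO hfa) (fun k => rfl)

end PartA4


section ConstrDef

open Denumerable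

/-- Canonical (sorted) list of elements of a finset of naturals. -/
def candList (F : Finset ℕ) : List ℕ :=
  raise' (ofNat (List ℕ) (@Encodable.encode (Finset ℕ) Denumerable.toEncodable F)) 0

theorem candList_mem_map (l : List ℕ) (x : ℕ) :
    x ∈ Finset.map (eqv ℕ).symm.toEmbedding (raise'Finset l 0) ↔ x ∈ raise' l 0 := by
  simp only [Finset.mem_map, Equiv.coe_toEmbedding]
  constructor
  · rintro ⟨a, ha, rfl⟩
    exact Multiset.mem_coe.1 ha
  · intro hx
    exact ⟨x, Multiset.mem_coe.2 hx, rfl⟩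

theorem candList_mem (x : ℕ) (F : Finset ℕ) : x ∈ candList F ↔ x ∈ F := by
  conv_rhs => rw [← Denumerable.ofNat_encode (α := Finset ℕ) F]
  exact (candList_mem_map _ _).symm

theorem candList_length (F : Finset ℕ) : (candList F).length = F.card := by
  conv_rhs => rw [← Denumerable.ofNat_encode (α := Finset ℕ) F]
  rw [show (Denumerable.ofNat (Finset ℕ) (@Encodable.encode (Finset ℕ) Denumerable.toEncodable F))
    = Finset.map (eqv ℕ).symm.toEmbedding (raise'Finset (Denumerable.ofNat (List ℕ)
        (@Encodable.encode (Finset ℕ) Denumerable.toEncodable F)) 0) from rfl]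
  rw [Finset.card_map]
  simp [raise'Finset, Finset.card_mk, candList]
  rfl

theorem candList_nodup (F : Finset ℕ) : (candList F).Nodup :=
  (Denumerable.raise'_sorted _ _).nodup

/-- Membership test for lists, via `foldr`. -/
def mb (L : List ℕ) (x : ℕ) : Bool := L.foldr (fun a r => decide (a = x) || r) false

theorem mb_iff (L : List ℕ) (x : ℕ) : mb L x = true ↔ x ∈ L := by
  induction L with
  | nil => simp [mb]
  | cons a t ih => simp [mb, List.foldr_cons, List.mem_cons] at ih ⊢; rw [ih]; tauto

/-- Max of a list, via `foldr`. -/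
def mx (L : List ℕ) : ℕ := L.foldr max 0

theorem lt_succ_mx {L : List ℕ} {x : ℕ} (hx : x ∈ L) : x < mx L + 1 := by
  have : x ≤ mx L := by
    induction L with
    | nil => simp at hx
    | cons a t ih =>
      rcases List.mem_cons.1 hx with rfl | hmem
      · exact le_max_left _ _
      · exact le_trans (ih hmem) (le_max_right _ _)
  omega

theorem mx_append (L M : List ℕ) : mx (L ++ M) = max (mx L) (mx M) := by
  induction L with
  | nil => simp [mx]
  | cons a t ih => simp [mx, List.foldr_append] at ih ⊢; rw [ih]

variable (h : ℕ → ℕ) (V : ℕ → Finset ℕ)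

/-- Raw content of unit `i` of stage `p` (truncated candidate). -/
def wU (p i : ℕ) : List ℕ :=
  if i < (candList (V p)).length then
    (if (Dl ((candList (V p)).getD i 0)).length = cF h p then
      (Dl ((candList (V p)).getD i 0)).take (tF h p i) else [])
  else []

/-- One step of the enumeration machine: state is `(stage, unit index, list so far)`. -/
def stepP (s : ℕ × ℕ × List ℕ) : ℕ × ℕ × List ℕ :=
  let base := (wU h V s.1 s.2.1).filter (fun x => ! mb s.2.2 x)
  let base2 := base ++ [mx (s.2.2 ++ base) + 1]
  if s.2.1 < h s.1 then (s.1, s.2.1 + 1, s.2.2 ++ base2) else (s.1 + 1, 0, s.2.2 ++ base2)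

/-- The enumeration machine after `n` steps. -/
def stM (n : ℕ) : ℕ × ℕ × List ℕ := Nat.rec (0, 0, ([] : List ℕ)) (fun _ s => stepP h V s) n

/-- The list enumerated after `n` steps. -/
def pfix (n : ℕ) : List ℕ := (stM h V n).2.2

/-- The sampling injection. -/
def gF (n : ℕ) : ℕ := (pfix h V (n + 1)).getD n 0

end ConstrDef


section ConstrComp

open Denumerable

theorem raise'_foldl (l : List ℕ) : ∀ (acc : List ℕ) (n : ℕ),
    (l.foldl (fun s a => (s.1 ++ [a + s.2], a + s.2 + 1)) (acc, n)).1 = acc ++ raise' l n := by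
  induction l with
  | nil => intro acc n; simp [raise']
  | cons m t ih =>
    intro acc n
    simp only [List.foldl_cons]
    rw [ih (acc ++ [m + n]) (m + n + 1)]
    simp [raise']

theorem primrec_candList : Primrec candList := by
  have hstep : Primrec₂ (fun (_ : Finset ℕ) (q : (List ℕ × ℕ) × ℕ) =>
      (q.1.1 ++ [q.2 + q.1.2], q.2 + q.1.2 + 1)) := by
    apply Primrec.pair
    · exact Primrec.list_concat.comp (Primrec.fst.comp (Primrec.fst.comp Primrec.snd))
        (Primrec.nat_add.comp (Primrec.snd.comp Primrec.snd)
          (Primrec.snd.comp (Primrec.fst.comp Primrec.snd)))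
    · exact Primrec.succ.comp (Primrec.nat_add.comp (Primrec.snd.comp Primrec.snd)
        (Primrec.snd.comp (Primrec.fst.comp Primrec.snd)))
  have hfold := Primrec.fst.comp (Primrec.list_foldl
    ((Primrec.ofNat (List ℕ)).comp Primrec.encode)
    (Primrec.const (([] : List ℕ), 0)) hstep)
  refine hfold.of_eq (fun F => ?_)
  exact ((raise'_foldl _ [] 0).trans (List.nil_append _)).trans rfl

theorem primrec_Dl : Primrec Dl := by
  have hpow : Primrec₂ (fun a b : ℕ => a ^ b) := Primrec₂.unpaired'.1 Nat.Primrec.pow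
  have hc : Primrec fun p : ℕ × (ℕ × List ℕ) => decide (p.1 / 2 ^ p.2.1 % 2 = 1) := by
    apply Primrec.eq.decide.comp ?_ (Primrec.const 1)
    exact Primrec.nat_mod.comp (Primrec.nat_div.comp Primrec.fst
      (hpow.comp (Primrec.const 2) (Primrec.fst.comp Primrec.snd))) (Primrec.const 2)
  have hstep : Primrec₂ (fun (v : ℕ) (q : ℕ × List ℕ) =>
      bif decide (v / 2 ^ q.1 % 2 = 1) then q.1 :: q.2 else q.2) :=
    Primrec.cond hc
      (Primrec.list_cons.comp (Primrec.fst.comp Primrec.snd) (Primrec.snd.comp Primrec.snd))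
      (Primrec.snd.comp Primrec.snd)
  have hfold := Primrec.list_foldr Primrec.list_range (Primrec.const ([] : List ℕ)) hstep
  refine hfold.of_eq (fun v => ?_)
  show (List.range v).foldr
      (fun a out => bif decide (v / 2 ^ a % 2 = 1) then a :: out else out) [] = Dl v
  exact (List.filter_eq_foldr _ _).symm

theorem take_eq_map (l : List ℕ) (n : ℕ) :
    l.take n = (List.range (min n l.length)).map (fun i => l.getD i 0) := by
  apply List.ext_getElem
  · simp
  · intro i h1 h2
    have hi : i < l.length := by simp at h2; omega
    simp [List.getElem_take, List.getD_eq_getElem?_getD, List.getElem?_eq_getElem hi]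

theorem primrec_take : Primrec₂ (fun (l : List ℕ) (n : ℕ) => l.take n) := by
  have hmap : Primrec fun p : List ℕ × ℕ =>
      (List.range (min p.2 p.1.length)).map (fun i => p.1.getD i 0) := by
    apply Primrec.list_map
      (Primrec.list_range.comp (Primrec.nat_min.comp Primrec.snd
        (Primrec.list_length.comp Primrec.fst)))
    exact (Primrec.list_getD 0).comp (Primrec.fst.comp Primrec.fst) Primrec.snd
  exact hmap.of_eq (fun p => (take_eq_map p.1 p.2).symm)

theorem bool_or_eq_cond (c r : Bool) : (c || r) = bif c then true else r := by
  cases c <;> rfl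

theorem primrec_mb : Primrec₂ mb := by
  have hstep : Primrec₂ (fun (p : List ℕ × ℕ) (q : ℕ × Bool) =>
      bif decide (q.1 = p.2) then true else q.2) :=
    Primrec.cond (Primrec.eq.decide.comp (Primrec.fst.comp Primrec.snd)
        (Primrec.snd.comp Primrec.fst))
      (Primrec.const true) (Primrec.snd.comp Primrec.snd)
  have hfold := Primrec.list_foldr Primrec.fst (Primrec.const false) hstep
  refine hfold.of_eq (fun p => ?_)
  show p.1.foldr (fun a r => bif decide (a = p.2) then true else r) false = mb p.1 p.2
  unfold mb
  congr 1


theorem primrec_mx : Primrec mx := by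
  have hstep : Primrec₂ (fun (_ : List ℕ) (q : ℕ × ℕ) => max q.1 q.2) :=
    Primrec.nat_max.comp (Primrec.fst.comp Primrec.snd) (Primrec.snd.comp Primrec.snd)
  have hfold := Primrec.list_foldr Primrec.id (Primrec.const 0) hstep
  exact hfold.of_eq (fun L => rfl)

/-- `filterNew M L` keeps the elements of `M` not occurring in `L`. -/
def filterNew (M L : List ℕ) : List ℕ := M.filter (fun x => ! mb L x)

theorem primrec_filterNew : Primrec₂ filterNew := by
  have hstep : Primrec₂ (fun (p : List ℕ × List ℕ) (q : ℕ × List ℕ) =>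
      bif mb p.2 q.1 then q.2 else q.1 :: q.2) :=
    Primrec.cond (primrec_mb.comp (Primrec.snd.comp Primrec.fst)
        (Primrec.fst.comp Primrec.snd))
      (Primrec.snd.comp Primrec.snd)
      (Primrec.list_cons.comp (Primrec.fst.comp Primrec.snd) (Primrec.snd.comp Primrec.snd))
  have hfold := Primrec.list_foldr Primrec.fst (Primrec.const ([] : List ℕ)) hstep
  refine hfold.of_eq (fun p => ?_)
  show p.1.foldr (fun a out => bif mb p.2 a then out else a :: out) [] = filterNew p.1 p.2
  rw [filterNew, List.filter_eq_foldr]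
  congr 1
  funext a out
  cases hd : mb p.2 a <;> simp [hd]

/-- `pad2 M L` appends a fresh element (larger than everything in `L ++ M`). -/
def pad2 (M L : List ℕ) : List ℕ := M ++ [mx (L ++ M) + 1]

theorem primrec_pad2 : Primrec₂ pad2 :=
  Primrec.list_concat.comp Primrec.fst
    (Primrec.succ.comp (primrec_mx.comp (Primrec.list_append.comp Primrec.snd Primrec.fst)))

variable {h : ℕ → ℕ} {V : ℕ → Finset ℕ}

theorem computable_tF (hc : Computable h) : Computable₂ (tF h) := by
  have hpow : Computable₂ (fun a b : ℕ => a ^ b) := (Primrec₂.unpaired'.1 Nat.Primrec.pow).to_comp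
  have hmul : Computable₂ (fun a b : ℕ => a * b) := Primrec.nat_mul.to_comp
  have hadd : Computable₂ (fun a b : ℕ => a + b) := Primrec.nat_add.to_comp
  exact hmul.comp (hpow.comp (hadd.comp Computable.fst (Computable.const 2)) Computable.snd)
    ((computable_uF hc).comp Computable.fst)

theorem computable_wU (hc : Computable h) (hV : Computable V) : Computable₂ (wU h V) := by
  have hl : Computable (fun q : ℕ × ℕ => candList (V q.1)) :=
    primrec_candList.to_comp.comp (hV.comp Computable.fst)
  have hgd : Computable (fun q : ℕ × ℕ => (candList (V q.1)).getD q.2 0) :=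
    (Primrec.list_getD 0).to_comp.comp hl Computable.snd
  have hdl : Computable (fun q : ℕ × ℕ => Dl ((candList (V q.1)).getD q.2 0)) :=
    primrec_Dl.to_comp.comp hgd
  have htk : Computable (fun q : ℕ × ℕ =>
      (Dl ((candList (V q.1)).getD q.2 0)).take (tF h q.1 q.2)) :=
    primrec_take.to_comp.comp hdl ((computable_tF hc).comp Computable.fst Computable.snd)
  have hinner : Computable (fun q : ℕ × ℕ =>
      if (Dl ((candList (V q.1)).getD q.2 0)).length = cF h q.1 then
        (Dl ((candList (V q.1)).getD q.2 0)).take (tF h q.1 q.2) else ([] : List ℕ)) := by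
    have hcnd : Computable (fun q : ℕ × ℕ =>
        decide ((Dl ((candList (V q.1)).getD q.2 0)).length = cF h q.1)) :=
      Primrec.eq.decide.to_comp.comp (Computable.list_length.comp hdl)
        ((computable_cF hc).comp Computable.fst)
    exact (Computable.cond hcnd htk (Computable.const [])).of_eq
      (fun q => by by_cases hq : (Dl ((candList (V q.1)).getD q.2 0)).length = cF h q.1 <;>
        simp [hq])
  have houter : Computable (fun q : ℕ × ℕ =>
      decide (q.2 < (candList (V q.1)).length)) :=
    Primrec.nat_lt.decide.to_comp.comp Computable.snd (Computable.list_length.comp hl)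
  exact (Computable.cond houter hinner (Computable.const [])).of_eq
    (fun q => by by_cases hq : q.2 < (candList (V q.1)).length <;> simp [wU, hq])

theorem computable_stepP (hc : Computable h) (hV : Computable V) : Computable (stepP h V) := by
  have hs1 : Computable (fun s : ℕ × ℕ × List ℕ => s.1) := Computable.fst
  have hs21 : Computable (fun s : ℕ × ℕ × List ℕ => s.2.1) :=
    Computable.fst.comp Computable.snd
  have hs22 : Computable (fun s : ℕ × ℕ × List ℕ => s.2.2) :=
    Computable.snd.comp Computable.snd
  have hwUs : Computable (fun s : ℕ × ℕ × List ℕ => wU h V s.1 s.2.1) :=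
    (computable_wU hc hV).comp hs1 hs21
  have hbase : Computable (fun s : ℕ × ℕ × List ℕ => filterNew (wU h V s.1 s.2.1) s.2.2) :=
    primrec_filterNew.to_comp.comp hwUs hs22
  have hL' : Computable (fun s : ℕ × ℕ × List ℕ =>
      s.2.2 ++ pad2 (filterNew (wU h V s.1 s.2.1) s.2.2) s.2.2) :=
    Computable.list_append.comp hs22 (primrec_pad2.to_comp.comp hbase hs22)
  have hcnd : Computable (fun s : ℕ × ℕ × List ℕ => decide (s.2.1 < h s.1)) :=
    Primrec.nat_lt.decide.to_comp.comp hs21 (hc.comp hs1)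
  have hbr1 : Computable (fun s : ℕ × ℕ × List ℕ => (s.1, s.2.1 + 1,
      s.2.2 ++ pad2 (filterNew (wU h V s.1 s.2.1) s.2.2) s.2.2)) :=
    hs1.pair ((Computable.succ.comp hs21).pair hL')
  have hbr2 : Computable (fun s : ℕ × ℕ × List ℕ => (s.1 + 1, 0,
      s.2.2 ++ pad2 (filterNew (wU h V s.1 s.2.1) s.2.2) s.2.2)) :=
    (Computable.succ.comp hs1).pair ((Computable.const 0).pair hL')
  refine (Computable.cond hcnd hbr1 hbr2).of_eq (fun s => ?_)
  by_cases hq : s.2.1 < h s.1 <;> simp [stepP, hq, filterNew, pad2]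

theorem computable_stM (hc : Computable h) (hV : Computable V) : Computable (stM h V) := by
  have hstep : Computable₂ (fun (_ : ℕ) (q : ℕ × (ℕ × ℕ × List ℕ)) => stepP h V q.2) :=
    (computable_stepP hc hV).comp (Computable.snd.comp Computable.snd)
  exact (Computable.nat_rec Computable.id (Computable.const (0, 0, ([] : List ℕ))) hstep).of_eq
    (fun n => by rfl)

theorem computable_gF (hc : Computable h) (hV : Computable V) : Computable (gF h V) := by
  have hpfix : Computable (pfix h V) :=
    (Computable.snd.comp Computable.snd).comp (computable_stM hc hV)
  exact (Primrec.list_getD 0).to_comp.comp (hpfix.comp Computable.succ) Computable.id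

end ConstrComp


section MachineLemmas

variable (h : ℕ → ℕ) (V : ℕ → Finset ℕ)

/-- The block appended at step `n`. -/
def bs (n : ℕ) : List ℕ :=
  pad2 (filterNew (wU h V (stM h V n).1 (stM h V n).2.1) (pfix h V n)) (pfix h V n)

theorem stM_succ (n : ℕ) : stM h V (n + 1) = stepP h V (stM h V n) := rfl

theorem pfix_succ (n : ℕ) : pfix h V (n + 1) = pfix h V n ++ bs h V n := by
  show (stepP h V (stM h V n)).2.2 = _
  unfold stepP bs pad2 filterNew
  split <;> rfl

theorem bs_ne_nil (n : ℕ) : bs h V n ≠ [] := by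
  unfold bs pad2
  simp

theorem bs_length_le (n : ℕ) :
    (bs h V n).length ≤ (wU h V (stM h V n).1 (stM h V n).2.1).length + 1 := by
  unfold bs pad2 filterNew
  simp only [List.length_append, List.length_cons, List.length_nil]
  have := (List.filter_sublist (l := wU h V (stM h V n).1 (stM h V n).2.1)
    (p := fun x => ! mb (pfix h V n) x)).length_le
  omega

theorem wU_length_le (p i : ℕ) : (wU h V p i).length ≤ tF h p i := by
  unfold wU
  split
  · split
    · simp [List.length_take]
    · simp
  · simp

theorem wU_nodup (p i : ℕ) : (wU h V p i).Nodup := by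
  unfold wU
  split
  · split
    · exact (Dl_nodup _).sublist (List.take_sublist _ _)
    · exact List.nodup_nil
  · exact List.nodup_nil

theorem pfix_prefix_succ (n : ℕ) : pfix h V n <+: pfix h V (n + 1) := by
  rw [pfix_succ]; exact List.prefix_append _ _

theorem pfix_prefix {m n : ℕ} (hmn : m ≤ n) : pfix h V m <+: pfix h V n := by
  induction n with
  | zero => rw [Nat.le_zero.1 hmn]
  | succ n ih =>
    rcases Nat.lt_or_ge m (n + 1) with hlt | hge
    · exact (ih (by omega)).trans (pfix_prefix_succ h V n)
    · rw [show m = n + 1 by omega]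

theorem pfix_length_lt (n : ℕ) : (pfix h V n).length < (pfix h V (n + 1)).length := by
  rw [pfix_succ, List.length_append]
  have := bs_ne_nil h V n
  have : (bs h V n).length ≠ 0 := fun hc => this (List.length_eq_zero_iff.1 hc)
  omega

theorem le_pfix_length (n : ℕ) : n ≤ (pfix h V n).length := by
  induction n with
  | zero => simp
  | succ n ih => have := pfix_length_lt h V n; omega

theorem mem_pfix_lt_mx {x : ℕ} {n : ℕ} (hx : x ∈ pfix h V n) : x < mx (pfix h V n) + 1 :=
  lt_succ_mx hx

theorem pfix_nodup (n : ℕ) : (pfix h V n).Nodup := by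
  induction n with
  | zero => exact List.nodup_nil
  | succ n ih =>
    rw [pfix_succ, List.nodup_append]
    refine ⟨ih, ?_, ?_⟩
    · unfold bs pad2
      rw [List.nodup_append]
      refine ⟨(wU_nodup h V _ _).filter _, List.nodup_singleton _, ?_⟩
      intro x hx y hy hxy
      rw [List.mem_singleton] at hy
      subst hy
      subst hxy
      exact lt_irrefl _ (lt_succ_mx (List.mem_append_right (pfix h V n) hx))
    · intro x hx y hx' hxy
      subst hxy
      unfold bs pad2 at hx'
      rcases List.mem_append.1 hx' with hx' | hx'
      · rw [filterNew, List.mem_filter] at hx'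
        have h2 := hx'.2
        rw [← mb_iff (pfix h V n) x] at hx
        simp [hx] at h2
      · rw [List.mem_singleton] at hx'
        subst hx'
        exact lt_irrefl _ (lt_succ_mx (List.mem_append_left _ hx))

end MachineLemmas


section MachineLemmas2

variable (h : ℕ → ℕ) (V : ℕ → Finset ℕ)

theorem gF_eq_getElem {n m : ℕ} (hn : n < (pfix h V m).length) :
    gF h V n = (pfix h V m)[n] := by
  have hn1 : n < (pfix h V (n + 1)).length := lt_of_lt_of_le (by omega) (le_pfix_length h V _)
  have : gF h V n = (pfix h V (n + 1))[n] := by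
    unfold gF
    exact List.getD_eq_getElem _ _ hn1
  rw [this]
  rcases le_total (n + 1) m with hle | hle
  · exact (pfix_prefix h V hle).getElem hn1
  · exact ((pfix_prefix h V hle).getElem hn).symm

theorem gF_inj : Function.Injective (gF h V) := by
  intro a b hab
  set m := max a b + 1 with hm
  have la : a < (pfix h V m).length := lt_of_lt_of_le (by omega) (le_pfix_length h V m)
  have lb : b < (pfix h V m).length := lt_of_lt_of_le (by omega) (le_pfix_length h V m)
  rw [gF_eq_getElem h V la, gF_eq_getElem h V lb] at hab
  exact ((pfix_nodup h V m).getElem_inj_iff (hi := la) (hj := lb)).1 hab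

/-- Start times of the stages. -/
def Cc : ℕ → ℕ := fun p => Nat.rec 0 (fun q ih => ih + (h q + 1)) p

theorem Cc_succ (p : ℕ) : Cc h (p + 1) = Cc h p + (h p + 1) := rfl

theorem le_Cc (p : ℕ) : p ≤ Cc h p := by
  induction p with
  | zero => simp
  | succ p ih => rw [Cc_succ]; omega

theorem stM_step_lt {n : ℕ} (hlt : (stM h V n).2.1 < h ((stM h V n).1)) :
    (stM h V (n + 1)).1 = (stM h V n).1 ∧ (stM h V (n + 1)).2.1 = (stM h V n).2.1 + 1 := by
  rw [stM_succ]
  unfold stepP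
  rw [if_pos hlt]
  exact ⟨rfl, rfl⟩

theorem stM_step_ge {n : ℕ} (hge : ¬ (stM h V n).2.1 < h ((stM h V n).1)) :
    (stM h V (n + 1)).1 = (stM h V n).1 + 1 ∧ (stM h V (n + 1)).2.1 = 0 := by
  rw [stM_succ]
  unfold stepP
  rw [if_neg hge]
  exact ⟨rfl, rfl⟩

theorem stM_track : ∀ p, ∀ i, i ≤ h p →
    (stM h V (Cc h p + i)).1 = p ∧ (stM h V (Cc h p + i)).2.1 = i := by
  have inner : ∀ p, ((stM h V (Cc h p)).1 = p ∧ (stM h V (Cc h p)).2.1 = 0) →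
      ∀ i, i ≤ h p → (stM h V (Cc h p + i)).1 = p ∧ (stM h V (Cc h p + i)).2.1 = i := by
    intro p hbase i
    induction i with
    | zero => intro _; simpa using hbase
    | succ i ih =>
      intro hle
      have hi := ih (by omega)
      have hlt : (stM h V (Cc h p + i)).2.1 < h ((stM h V (Cc h p + i)).1) := by
        rw [hi.1, hi.2]; omega
      have := stM_step_lt h V hlt
      rw [hi.1, hi.2] at this
      exact ⟨by rw [show Cc h p + (i + 1) = Cc h p + i + 1 by omega, this.1],
        by rw [show Cc h p + (i + 1) = Cc h p + i + 1 by omega, this.2]⟩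
  have start : ∀ p, (stM h V (Cc h p)).1 = p ∧ (stM h V (Cc h p)).2.1 = 0 := by
    intro p
    induction p with
    | zero => exact ⟨rfl, rfl⟩
    | succ p ih =>
      have hend := inner p ih (h p) le_rfl
      have hge : ¬ (stM h V (Cc h p + h p)).2.1 < h ((stM h V (Cc h p + h p)).1) := by
        rw [hend.1, hend.2]; omega
      have := stM_step_ge h V hge
      rw [hend.1] at this
      have heq : Cc h (p + 1) = Cc h p + h p + 1 := by rw [Cc_succ]; omega
      exact ⟨by rw [heq, this.1], by rw [heq, this.2]⟩
  exact fun p => inner p (start p)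

theorem geom_bound (p : ℕ) : ∀ k, (p + 1) * (Finset.range k).sum (fun j => (p + 2) ^ j)
    ≤ (p + 2) ^ k := by
  intro k
  induction k with
  | zero => simp
  | succ k ih =>
    rw [Finset.sum_range_succ, Nat.mul_add, pow_succ]
    have h1 : (p + 1) * (p + 2) ^ k ≤ (p + 2) ^ k * (p + 1) := by ring_nf; omega
    calc (p + 1) * (Finset.range k).sum (fun j => (p + 2) ^ j) + (p + 1) * (p + 2) ^ k
        ≤ (p + 2) ^ k + (p + 2) ^ k * (p + 1) := by omega
      _ = (p + 2) ^ k * (p + 2) := by ring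

theorem pfix_len_checkpoint (p : ℕ) : ∀ i, i ≤ h p + 1 →
    (pfix h V (Cc h p + i)).length ≤ (pfix h V (Cc h p)).length + i +
      (Finset.range i).sum (fun j => tF h p j) := by
  intro i
  induction i with
  | zero => intro _; simp
  | succ i ih =>
    intro hle
    have hi := ih (by omega)
    have htrack := stM_track h V p i (by omega)
    have hlen : (pfix h V (Cc h p + i + 1)).length ≤ (pfix h V (Cc h p + i)).length
        + tF h p i + 1 := by
      rw [pfix_succ, List.length_append]
      have h1 := bs_length_le h V (Cc h p + i)
      rw [htrack.1, htrack.2] at h1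
      have h2 := wU_length_le h V p i
      omega
    rw [show Cc h p + (i + 1) = Cc h p + i + 1 by omega, Finset.sum_range_succ]
    omega

theorem pfix_len_Hist (p : ℕ) : (pfix h V (Cc h p)).length ≤ HistF h p := by
  induction p with
  | zero => exact le_rfl
  | succ p ih =>
    have hcp := pfix_len_checkpoint h V p (h p + 1) le_rfl
    have hsum : (Finset.range (h p + 1)).sum (fun j => tF h p j) ≤ (h p + 1) * cF h p := by
      calc (Finset.range (h p + 1)).sum (fun j => tF h p j)
          ≤ (Finset.range (h p + 1)).sum (fun _ => cF h p) :=
            Finset.sum_le_sum (fun j hj => tF_le_cF h (by simp at hj; omega))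
        _ = (h p + 1) * cF h p := by simp [Finset.sum_const, mul_comm]
    have heq : Cc h (p + 1) = Cc h p + (h p + 1) := Cc_succ h p
    rw [heq]
    rw [HistF_succ]
    calc (pfix h V (Cc h p + (h p + 1))).length
        ≤ (pfix h V (Cc h p)).length + (h p + 1) + (Finset.range (h p + 1)).sum
          (fun j => tF h p j) := hcp
      _ ≤ HistF h p + (h p + 1) + (h p + 1) * cF h p := by omega
      _ ≤ HistF h p + (h p + 1) * (cF h p + 1) := by ring_nf; omega

end MachineLemmas2


section GoodStage

variable {A : Set ℕ}

theorem goodStage (hinf : A.Infinite) (h : ℕ → ℕ) (V : ℕ → Finset ℕ)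
    (p : ℕ) (hcard : (V p).card ≤ h p) (hmemV : fT hinf h p ∈ V p) :
    ∃ N T : ℕ, p ≤ N ∧ 0 < N ∧ 0 < T ∧ (p + 1) * N ≤ (p + 3) * T ∧
      T ≤ ((gF h V ⁻¹' A) ∩ Set.Iio N).ncard := by
  classical
  have hmemL : fT hinf h p ∈ candList (V p) := (candList_mem _ _).2 hmemV
  obtain ⟨i, hi, hgetEq⟩ := List.getElem_of_mem hmemL
  have higetD : (candList (V p)).getD i 0 = fT hinf h p := by
    rw [List.getD_eq_getElem _ _ hi, hgetEq]
  have hihp : i < h p := by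
    have := candList_length (V p)
    omega
  have hDlen : (Dl ((candList (V p)).getD i 0)).length = cF h p := by
    rw [higetD]
    unfold fT
    rw [Dl_eO_length, cnt_aF]
  have hwU : wU h V p i = (Dl (fT hinf h p)).take (tF h p i) := by
    unfold wU
    rw [if_pos hi, if_pos hDlen, higetD]
  have hWlen : (wU h V p i).length = tF h p i := by
    rw [hwU, List.length_take]
    have h1 : tF h p i ≤ cF h p := tF_le_cF h (le_of_lt hihp)
    have h2 : (Dl (fT hinf h p)).length = cF h p := by rw [← higetD]; exact hDlen
    omega
  have hWsubA : ∀ x ∈ (wU h V p i), x ∈ A := by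
    intro x hx
    rw [hwU] at hx
    have : x ∈ Dl (fT hinf h p) := List.mem_of_mem_take hx
    exact (mem_Dl_eO.1 this).1
  set n0 := Cc h p + i with hn0
  set N := (pfix h V (n0 + 1)).length with hN
  have htrack := stM_track h V p i (le_of_lt hihp)
  have hWsubP : ∀ x ∈ (wU h V p i), x ∈ pfix h V (n0 + 1) := by
    intro x hx
    rw [pfix_succ]
    unfold bs
    rw [htrack.1, htrack.2]
    by_cases hmb : mb (pfix h V n0) x
    · exact List.mem_append_left _ ((mb_iff _ _).1 hmb)
    · refine List.mem_append_right _ ?_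
      unfold pad2
      refine List.mem_append_left _ ?_
      rw [filterNew, List.mem_filter]
      exact ⟨hx, by simp [hmb]⟩
  -- counting
  set Fn := (Finset.range N).filter (fun n => gF h V n ∈ A) with hFn
  have hset : (gF h V ⁻¹' A) ∩ Set.Iio N = ↑Fn := by
    ext x
    simp [hFn, Set.mem_inter_iff, and_comm]
  have hsubim : (wU h V p i).toFinset ⊆ Fn.image (gF h V) := by
    intro x hx
    rw [List.mem_toFinset] at hx
    obtain ⟨j, hj, hjx⟩ := List.getElem_of_mem (hWsubP x hx)
    have hgj : gF h V j = x := by rw [gF_eq_getElem h V hj, hjx]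
    rw [Finset.mem_image]
    refine ⟨j, ?_, hgj⟩
    rw [hFn, Finset.mem_filter, Finset.mem_range]
    exact ⟨hj, by rw [hgj]; exact hWsubA x hx⟩
  have hcount : tF h p i ≤ ((gF h V ⁻¹' A) ∩ Set.Iio N).ncard := by
    rw [hset, Set.ncard_coe_finset]
    calc tF h p i = (wU h V p i).length := hWlen.symm
      _ = (wU h V p i).toFinset.card := (List.toFinset_card_of_nodup (wU_nodup h V p i)).symm
      _ ≤ (Fn.image (gF h V)).card := Finset.card_le_card hsubim
      _ = Fn.card := Finset.card_image_of_injective _ (gF_inj h V)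
  -- size bounds
  have hNlow : n0 + 1 ≤ N := le_pfix_length h V (n0 + 1)
  have hplow : p ≤ N := le_trans (le_trans (le_Cc h p) (by omega)) hNlow
  have hT : 0 < tF h p i := lt_of_lt_of_le (one_le_uF h p) (uF_le_tF h p i)
  -- main inequality
  have hcp := pfix_len_checkpoint h V p (i + 1) (by omega)
  have hHist := pfix_len_Hist h V p
  have hNle : N ≤ HistF h p + (i + 1) + (Finset.range (i + 1)).sum (fun j => tF h p j) := by
    have : n0 + 1 = Cc h p + (i + 1) := by omega
    rw [hN, this]
    omega
  have hu1 : (p + 1) * (HistF h p + (i + 1)) ≤ uF h p := by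
    unfold uF
    have : HistF h p + (i + 1) ≤ HistF h p + 2 * h p + 1 := by omega
    exact Nat.mul_le_mul_left _ this
  have hu2 : (p + 1) * (Finset.range (i + 1)).sum (fun j => tF h p j)
      ≤ (p + 2) * tF h p i := by
    have hsum : (Finset.range (i + 1)).sum (fun j => tF h p j)
        = ((Finset.range (i + 1)).sum (fun j => (p + 2) ^ j)) * uF h p := by
      rw [Finset.sum_mul]
      rfl
    rw [hsum, ← Nat.mul_assoc]
    calc (p + 1) * (Finset.range (i + 1)).sum (fun j => (p + 2) ^ j) * uF h p
        ≤ (p + 2) ^ (i + 1) * uF h p := Nat.mul_le_mul_right _ (geom_bound p (i + 1))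
      _ = (p + 2) * tF h p i := by unfold tF; rw [pow_succ]; ring
  have hmain : (p + 1) * N ≤ (p + 3) * tF h p i := by
    calc (p + 1) * N ≤ (p + 1) * (HistF h p + (i + 1) +
        (Finset.range (i + 1)).sum (fun j => tF h p j)) := Nat.mul_le_mul_left _ hNle
      _ = (p + 1) * (HistF h p + (i + 1)) + (p + 1) * (Finset.range (i + 1)).sum
          (fun j => tF h p j) := by ring
      _ ≤ uF h p + (p + 2) * tF h p i := by omega
      _ ≤ tF h p i + (p + 2) * tF h p i := by have := uF_le_tF h p i; omega
      _ = (p + 3) * tF h p i := by ring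
  exact ⟨N, tF h p i, hplow, by omega, hT, hmain, hcount⟩

end GoodStage


section Final

theorem pden_nonneg (S : Set ℕ) (n : ℕ) : 0 ≤ pden S n := by
  unfold pden; positivity

theorem pden_le_one (S : Set ℕ) (n : ℕ) : pden S n ≤ 1 := by
  unfold pden
  rcases Nat.eq_zero_or_pos n with rfl | hn
  · simp
  · rw [div_le_one (by exact_mod_cast hn)]
    have h1 : (S ∩ Set.Iio n).ncard ≤ (Set.Iio n).ncard :=
      Set.ncard_le_ncard Set.inter_subset_right (Set.finite_Iio n)
    have h2 : (Set.Iio (n : ℕ)).ncard = n := by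
      rw [← Finset.coe_range, Set.ncard_coe_finset, Finset.card_range]
    exact_mod_cast h1.trans_eq h2

theorem limsup_eq_one_of (u : ℕ → ℝ) (h01 : ∀ n, 0 ≤ u n) (hle : ∀ n, u n ≤ 1)
    (hfreq : ∀ C : ℝ, C < 1 → ∃ᶠ n in atTop, C ≤ u n) : limsup u atTop = 1 := by
  have hb : IsBoundedUnder (· ≤ ·) atTop u := isBoundedUnder_of ⟨1, hle⟩
  have hc : IsCoboundedUnder (· ≤ ·) atTop u :=
    Filter.IsBoundedUnder.isCoboundedUnder_le (isBoundedUnder_of ⟨0, h01⟩)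
  refine le_antisymm (Filter.limsup_le_of_le hc (Eventually.of_forall hle)) ?_
  by_contra hcon
  push_neg at hcon
  have h2 := Filter.le_limsup_of_frequently_le
    (hfreq ((1 + limsup u atTop) / 2) (by linarith)) hb
  linarith

theorem limsup_pden_le_one (S : Set ℕ) :
    limsup (fun n => pden S n) atTop ≤ 1 :=
  Filter.limsup_le_of_le
    (Filter.IsBoundedUnder.isCoboundedUnder_le
      (isBoundedUnder_of ⟨0, fun n => pden_nonneg S n⟩))
    (Filter.Eventually.of_forall (fun n => pden_le_one S n))

end Final

theorem stmt4 (A : Set ℕ) (hinf : A.Infinite) (hwct : WCT A) :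
    (∃ g : ℕ → ℕ, Computable g ∧ Function.Injective g ∧
      limsup (fun n => pden (g ⁻¹' A) n) atTop = 1) ∧
    AUD A = 1 := by
  classical
  obtain ⟨h, hcomp, hWCT⟩ := hwct
  obtain ⟨V, hVcomp, hVcard, hVfreq⟩ := hWCT (fT hinf h) (funleT_fT hinf hcomp)
  have hginj := gF_inj h V
  have hgcomp := computable_gF hcomp hVcomp
  have hfreqC : ∀ C : ℝ, C < 1 → ∃ᶠ n in atTop, C ≤ pden (gF h V ⁻¹' A) n := by
    intro C hC
    rw [Filter.frequently_atTop]
    intro M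
    obtain ⟨p₀, hp₀⟩ := exists_nat_gt (2 / (1 - C))
    obtain ⟨p, hpge, hpgood⟩ := (Filter.frequently_atTop.1 hVfreq) (max M p₀)
    obtain ⟨N, T, hpN, hN0, hT0, hmain, hcount⟩ := goodStage hinf h V p (hVcard p) hpgood
    refine ⟨N, le_trans (le_trans (le_max_left M p₀) hpge) hpN, ?_⟩
    have hNpos : (0:ℝ) < (N : ℝ) := by exact_mod_cast hN0
    have hP : ((p:ℝ) + 1) / ((p:ℝ) + 3) ≤ pden (gF h V ⁻¹' A) N := by
      unfold pden
      rw [div_le_div_iff₀ (by positivity) hNpos]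
      have hnat : (p + 1) * N ≤ ((gF h V ⁻¹' A) ∩ Set.Iio N).ncard * (p + 3) := by
        calc (p + 1) * N ≤ (p + 3) * T := hmain
          _ ≤ (p + 3) * ((gF h V ⁻¹' A) ∩ Set.Iio N).ncard := Nat.mul_le_mul_left _ hcount
          _ = _ := Nat.mul_comm _ _
      exact_mod_cast hnat
    have hCle : C ≤ ((p:ℝ) + 1) / ((p:ℝ) + 3) := by
      have h1 : (0:ℝ) < 1 - C := by linarith
      have hp0p : (p₀ : ℝ) ≤ (p : ℝ) := by
        exact_mod_cast le_trans (le_max_right M p₀) hpge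
      have h2 : 2 / (1 - C) < (p : ℝ) + 3 := by linarith
      have h3 : 2 < (1 - C) * ((p:ℝ) + 3) := by
        rw [div_lt_iff₀ h1] at h2
        linarith
      rw [le_div_iff₀ (by positivity)]
      nlinarith
    exact le_trans hCle hP
  have hlimsup : limsup (fun n => pden (gF h V ⁻¹' A) n) atTop = 1 :=
    limsup_eq_one_of _ (fun n => pden_nonneg _ n) (fun n => pden_le_one _ n) hfreqC
  refine ⟨⟨gF h V, hgcomp, hginj, hlimsup⟩, ?_⟩
  unfold AUD
  have hmem1 : (1:ℝ) ∈ {x : ℝ | ∃ p : ℕ → ℕ, Computable p ∧ Function.Injective p ∧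
      x = limsup (fun n => pden (p ⁻¹' A) n) atTop} :=
    ⟨gF h V, hgcomp, hginj, hlimsup.symm⟩
  have hub : ∀ x ∈ {x : ℝ | ∃ p : ℕ → ℕ, Computable p ∧ Function.Injective p ∧
      x = limsup (fun n => pden (p ⁻¹' A) n) atTop}, x ≤ 1 := by
    rintro x ⟨q, hq, hqinj, rfl⟩
    exact limsup_pden_le_one _
  exact le_antisymm (csSup_le ⟨1, hmem1⟩ hub) (le_csSup ⟨1, fun x hx => hub x hx⟩ hmem1)
end

section
/- Let A ⊆ ℕ be infinite, let p_A(k) denote the k-th element of A in increasing order, and let f : ℕ → ℕ be defined by letting f(n) be the canonical code of the finite binary string A↾p_A(n!) (the characteristic sequence of A restricted below its (n!)-th element). If there is a total computable function h : ℕ → ℕ with h(n) = f(n) for infinitely many n, then there is a computable injection g : ℕ → ℕ such that ρ_{n!}(g⁻¹(A)) ≥ 1 − 1/n for infinitely many n; in particular limsup_{n→∞} ρ_n(g⁻¹(A)) = 1. -/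
open Filter

namespace Stmt5Aux

/-- positions of `true` in a boolean list -/
def ones (L : List Bool) : List ℕ :=
  (List.range L.length).filterMap fun i => if L.getD i false then some i else none

/-- largest `n` with `n ! ≤ m` (for `m ≥ 1`). -/
def blk (m : ℕ) : ℕ := (List.range (m + 1)).findIdx fun n => decide (m < (n + 1).factorial)

def step2 (c : ℕ) (prev : List ℕ) : ℕ :=
  ((ones ((Encodable.decode (α := List Bool) c).getD [])).filterMap
    fun x => if prev.idxOf x < prev.length then none else some x).head?.getD
    (prev.foldr max 0 + 1)

def step (h : ℕ → ℕ) (prev : List ℕ) : ℕ := step2 (h (blk prev.length + 1)) prev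

def gseq (h : ℕ → ℕ) : ℕ → List ℕ
  | 0 => []
  | n + 1 => gseq h n ++ [step h (gseq h n)]

def gfun (h : ℕ → ℕ) (m : ℕ) : ℕ := step h (gseq h m)

lemma length_gseq (h : ℕ → ℕ) (m : ℕ) : (gseq h m).length = m := by
  induction m with
  | zero => rfl
  | succ n ih => simp [gseq, ih]

lemma gseq_eq (h : ℕ → ℕ) (m : ℕ) : gseq h m = (List.range m).map (gfun h) := by
  induction m with
  | zero => rfl
  | succ n ih => simp [gseq, ih, List.range_succ, gfun]

lemma le_foldr_max (l : List ℕ) : ∀ x ∈ l, x ≤ l.foldr max 0 := by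
  induction l with
  | nil => simp
  | cons a l ih =>
    intro x hx
    rcases List.mem_cons.1 hx with rfl | hx
    · exact le_max_left _ _
    · exact le_trans (ih x hx) (le_max_right _ _)

lemma step2_not_mem (c : ℕ) (prev : List ℕ) : step2 c prev ∉ prev := by
  classical
  unfold step2
  set Q := ((ones ((Encodable.decode (α := List Bool) c).getD [])).filterMap
    fun x => if prev.idxOf x < prev.length then none else some x) with hQ
  cases hh : Q.head? with
  | none =>
    rw [Option.getD_none]
    intro hmem
    have := le_foldr_max prev _ hmem
    omega
  | some x =>
    have hxQ : x ∈ Q := List.mem_of_mem_head? (by rw [hh]; simp)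
    rw [hQ, List.mem_filterMap] at hxQ
    obtain ⟨a, _, ha⟩ := hxQ
    by_cases hc : prev.idxOf a < prev.length
    · simp [hc] at ha
    · simp [hc] at ha
      subst ha
      rw [Option.getD_some]
      exact fun hmem => hc (List.idxOf_lt_length_iff.2 hmem)

lemma step_not_mem (h : ℕ → ℕ) (prev : List ℕ) : step h prev ∉ prev := step2_not_mem _ _

lemma gfun_injective (h : ℕ → ℕ) : Function.Injective (gfun h) := by
  have key : ∀ k m : ℕ, k < m → gfun h k ≠ gfun h m := by
    intro k m hkm heq
    have hmem : gfun h k ∈ gseq h m := by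
      rw [gseq_eq]
      exact List.mem_map.2 ⟨k, List.mem_range.2 hkm, rfl⟩
    rw [heq] at hmem
    exact step_not_mem h (gseq h m) hmem
  intro a b hab
  rcases lt_trichotomy a b with hl | he | hl
  · exact absurd hab (key a b hl)
  · exact he
  · exact absurd hab.symm (key b a hl)

lemma primrec_factorial : Primrec Nat.factorial := by
  have : Primrec fun n => Nat.rec (motive := fun _ => ℕ) 1 (fun k ih => (k + 1) * ih) n :=
    Primrec.nat_rec₁ 1 (Primrec.nat_mul.comp (Primrec.succ.comp .fst) .snd).to₂
  refine this.of_eq fun n => ?_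
  induction n with
  | zero => rfl
  | succ k ih => simpa [Nat.factorial_succ, ih] using (mul_comm _ _)

lemma primrec_blk : Primrec blk := by
  have hp : Primrec₂ fun (m n : ℕ) => decide (m < (n + 1).factorial) :=
    PrimrecPred.decide (Primrec.nat_lt.comp .fst (primrec_factorial.comp (Primrec.succ.comp .snd)))
  exact Primrec.list_findIdx (Primrec.list_range.comp Primrec.succ) hp

lemma primrec_ones : Primrec ones := by
  have hg : Primrec₂ fun (L : List Bool) (i : ℕ) =>
      if L.getD i false then some i else none := by
    have hc : Primrec fun p : List Bool × ℕ => p.1.getD p.2 false :=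
      (Primrec.list_getD false).comp .fst .snd
    exact (Primrec.cond hc (Primrec.option_some.comp .snd) (Primrec.const none)).to₂.of_eq
      (fun L i => by cases hb : L.getD i false <;> simp [hb])
  exact Primrec.listFilterMap (Primrec.list_range.comp Primrec.list_length) hg

lemma primrec_step2 : Primrec₂ step2 := by
  have hP : Primrec fun p : ℕ × List ℕ =>
      ones ((Encodable.decode (α := List Bool) p.1).getD []) :=
    primrec_ones.comp (Primrec.option_getD.comp (Primrec.decode.comp .fst) (.const []))
  have hg : Primrec₂ fun (p : ℕ × List ℕ) (x : ℕ) =>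
      if p.2.idxOf x < p.2.length then none else some x := by
    have hc : PrimrecPred fun q : (ℕ × List ℕ) × ℕ => q.1.2.idxOf q.2 < q.1.2.length :=
      Primrec.nat_lt.comp (Primrec.list_idxOf.comp .snd (Primrec.snd.comp .fst))
        (Primrec.list_length.comp (Primrec.snd.comp .fst))
    exact (Primrec.ite hc (Primrec.const none) (Primrec.option_some.comp .snd)).to₂
  have hQ : Primrec fun p : ℕ × List ℕ =>
      ((ones ((Encodable.decode (α := List Bool) p.1).getD [])).filterMap
        fun x => if p.2.idxOf x < p.2.length then none else some x) :=
    Primrec.listFilterMap hP hg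
  have hfb : Primrec fun p : ℕ × List ℕ => p.2.foldr max 0 + 1 :=
    Primrec.succ.comp (Primrec.list_foldr .snd (.const 0)
      (Primrec.nat_max.comp (Primrec.fst.comp .snd) (Primrec.snd.comp .snd)).to₂)
  exact (Primrec.option_getD.comp (Primrec.list_head?.comp hQ) hfb).to₂

lemma computable_gseq (h : ℕ → ℕ) (hcomp : Computable h) : Computable (gseq h) := by
  have hstep : Computable₂ fun (_ : ℕ) (p : ℕ × List ℕ) => p.2 ++ [step h p.2] := by
    have hlen : Computable fun q : ℕ × (ℕ × List ℕ) => (q.2.2.length : ℕ) :=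
      Primrec.to_comp (Primrec.list_length.comp (Primrec.snd.comp .snd))
    have hhv : Computable fun q : ℕ × (ℕ × List ℕ) => h (blk q.2.2.length + 1) :=
      hcomp.comp ((Primrec.succ.comp primrec_blk).to_comp.comp hlen)
    have hs : Computable fun q : ℕ × (ℕ × List ℕ) => step h q.2.2 := by
      have := primrec_step2.to_comp.comp hhv
        (Primrec.to_comp (Primrec.snd.comp .snd) : Computable fun q : ℕ × (ℕ × List ℕ) => q.2.2)
      refine this.of_eq fun q => ?_
      simp [step]
    exact (Primrec.list_append.to_comp.comp
      (Primrec.to_comp (Primrec.snd.comp .snd))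
      ((Primrec.list_cons.to_comp.comp hs (Computable.const []))))
  have := Computable.nat_rec (f := fun m : ℕ => m) (g := fun _ : ℕ => ([] : List ℕ))
    (h := fun (_ : ℕ) (p : ℕ × List ℕ) => p.2 ++ [step h p.2])
    Computable.id (Computable.const []) hstep
  refine this.of_eq fun m => ?_
  induction m with
  | zero => rfl
  | succ n ih => simp [gseq, ← ih]

lemma computable_gfun (h : ℕ → ℕ) (hcomp : Computable h) : Computable (gfun h) := by
  have hhv : Computable fun m : ℕ => h (blk m + 1) :=
    hcomp.comp (Primrec.succ.comp primrec_blk).to_comp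
  have := primrec_step2.to_comp.comp hhv (computable_gseq h hcomp)
  refine this.of_eq fun m => ?_
  simp [gfun, step, length_gseq]


lemma filterMap_if (c : ℕ → Bool) (l : List ℕ) :
    (l.filterMap fun i => if c i then some i else none) = l.filter c := by
  induction l with
  | nil => rfl
  | cons a l ih => by_cases h : c a <;> simp [h, ih]

lemma blk_eq {n m : ℕ} (hn : 1 ≤ n) (hm1 : n.factorial ≤ m) (hm2 : m < (n + 1).factorial) :
    blk m = n := by
  have hnm : n < m + 1 := by have := Nat.self_le_factorial n; omega
  unfold blk
  rw [List.findIdx_eq (by simpa using hnm)]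
  constructor
  · simp only [List.getElem_range, decide_eq_true_eq]
    exact hm2
  · intro j hj
    simp only [List.getElem_range, decide_eq_false_iff_not, not_lt]
    exact le_trans (Nat.factorial_le (by omega)) hm1

open Classical in
lemma gfun_mem (A : Set ℕ) (hinf : A.Infinite) (h : ℕ → ℕ) {n m : ℕ}
    (hn : 1 ≤ n) (hm1 : n.factorial ≤ m) (hm2 : m < (n + 1).factorial)
    (hag : h (n + 1) = Encodable.encode
      ((List.range (Nat.nth (· ∈ A) (n + 1).factorial)).map fun i => decide (i ∈ A))) :
    gfun h m ∈ A := by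
  set p := Nat.nth (· ∈ A) (n + 1).factorial with hp
  set L : List Bool := (List.range p).map fun i => decide (i ∈ A) with hL
  have hblk : blk m = n := blk_eq hn hm1 hm2
  have hgf : gfun h m = step2 (h (n + 1)) (gseq h m) := by
    rw [gfun, step, length_gseq, hblk]
  have hdec : (Encodable.decode (α := List Bool) (h (n + 1))).getD [] = L := by
    rw [hag, Encodable.encodek]; rfl
  -- identify `ones L`
  have hlenL : L.length = p := by simp [hL]
  have honesL : ones L = (List.range p).filter fun i => decide (i ∈ A) := by
    rw [ones, hlenL, ← filterMap_if]
    apply List.filterMap_congr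
    intro x hx
    have hxp : x < p := List.mem_range.1 hx
    have : L.getD x false = decide (x ∈ A) := by
      rw [List.getD_eq_getElem L false (by rw [hlenL]; exact hxp)]
      simp [hL]
    rw [this]
  have hmemA : ∀ x ∈ ones L, x ∈ A := by
    intro x hx
    rw [honesL, List.mem_filter] at hx
    exact of_decide_eq_true hx.2
  have hnodup : (ones L).Nodup := by
    rw [honesL]; exact (List.nodup_range (n := p)).filter _
  have hlenOnes : (ones L).length = (n + 1).factorial := by
    rw [honesL, ← List.countP_eq_length_filter]
    have : Nat.count (· ∈ A) p = (n + 1).factorial :=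
      Nat.count_nth_of_infinite (p := (· ∈ A)) hinf _
    simpa [Nat.count] using this
  -- previous values
  set prev := gseq h m with hprev
  have hlenPrev : prev.length = m := length_gseq h m
  -- there is a fresh element of `ones L`
  have hex : ∃ x ∈ ones L, x ∉ prev := by
    by_contra hcon
    push_neg at hcon
    have hsubf : (ones L).toFinset ⊆ prev.toFinset := by
      intro x hx
      rw [List.mem_toFinset] at hx ⊢
      exact hcon x hx
    have h1 : (ones L).length ≤ prev.length := by
      calc (ones L).length = (ones L).toFinset.card := (List.toFinset_card_of_nodup hnodup).symm
        _ ≤ prev.toFinset.card := Finset.card_le_card hsubf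
        _ ≤ prev.length := List.toFinset_card_le prev
    rw [hlenOnes, hlenPrev] at h1
    omega
  obtain ⟨x, hxP, hxprev⟩ := hex
  set Q := ((ones L).filterMap fun y => if prev.idxOf y < prev.length then none else some y)
    with hQ
  have hxQ : x ∈ Q := by
    rw [hQ, List.mem_filterMap]
    refine ⟨x, hxP, ?_⟩
    rw [if_neg]
    intro hlt
    exact hxprev (List.idxOf_lt_length_iff.1 hlt)
  have hQne : Q ≠ [] := List.ne_nil_of_mem hxQ
  obtain ⟨y, hy⟩ : ∃ y, Q.head? = some y := by
    cases hQc : Q with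
    | nil => exact absurd hQc hQne
    | cons a t => exact ⟨a, rfl⟩
  have hval : gfun h m = y := by
    rw [hgf, step2, hdec, ← hQ, hy, Option.getD_some]
  have hyQ : y ∈ Q := List.mem_of_mem_head? (by rw [hy]; simp)
  have hyP : y ∈ ones L := by
    rw [hQ, List.mem_filterMap] at hyQ
    obtain ⟨a, ha, hae⟩ := hyQ
    by_cases hc : prev.idxOf a < prev.length
    · simp [hc] at hae
    · simp [hc] at hae
      exact hae ▸ ha
  rw [hval]
  exact hmemA y hyP

end Stmt5Aux


namespace Stmt5Aux

lemma pden_nonneg (S : Set ℕ) (n : ℕ) : 0 ≤ pden S n :=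
  div_nonneg (Nat.cast_nonneg _) (Nat.cast_nonneg _)

lemma pden_le_one (S : Set ℕ) (n : ℕ) : pden S n ≤ 1 := by
  rcases Nat.eq_zero_or_pos n with rfl | hn
  · simp [pden]
  · have hcard : (S ∩ Set.Iio n).ncard ≤ n := by
      have h1 : (S ∩ Set.Iio n).ncard ≤ (Set.Iio n).ncard :=
        Set.ncard_le_ncard Set.inter_subset_right (Set.finite_Iio n)
      have h2 : (Set.Iio n : Set ℕ).ncard = n := by
        rw [← Finset.coe_Iio, Set.ncard_coe_finset, Nat.card_Iio]
      omega
    rw [pden, div_le_one (by exact_mod_cast hn)]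
    exact_mod_cast hcard

lemma pden_ge (S : Set ℕ) {a b : ℕ} (hab : a ≤ b) (hb : 0 < b) (hsub : Set.Ico a b ⊆ S) :
    1 - (a : ℝ) / b ≤ pden S b := by
  have hfin : (S ∩ Set.Iio b).Finite := (Set.finite_Iio b).subset Set.inter_subset_right
  have hsub2 : Set.Ico a b ⊆ S ∩ Set.Iio b := fun x hx => ⟨hsub hx, hx.2⟩
  have hcard : b - a ≤ (S ∩ Set.Iio b).ncard := by
    have h1 : (Set.Ico a b).ncard = b - a := by
      rw [← Finset.coe_Ico, Set.ncard_coe_finset, Nat.card_Ico]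
    rw [← h1]
    exact Set.ncard_le_ncard hsub2 hfin
  have hbR : (0:ℝ) < b := by exact_mod_cast hb
  have h1 : (1 : ℝ) - a / b = ((b - a : ℕ) : ℝ) / b := by
    rw [Nat.cast_sub hab]; field_simp
  rw [pden, h1]
  gcongr

end Stmt5Aux


open Classical in
theorem stmt5 (A : Set ℕ) (hinf : A.Infinite) (f : ℕ → ℕ)
    (hf : ∀ n : ℕ, f n = Encodable.encode
      ((List.range (Nat.nth (· ∈ A) n.factorial)).map fun i => decide (i ∈ A)))
    (h : ℕ → ℕ) (hcomp : Computable h) (hagree : ∃ᶠ n in atTop, h n = f n) :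
    ∃ g : ℕ → ℕ, Computable g ∧ Function.Injective g ∧
      (∃ᶠ n : ℕ in atTop, pden (g ⁻¹' A) n.factorial ≥ 1 - 1 / (n : ℝ)) ∧
      limsup (fun n => pden (g ⁻¹' A) n) atTop = 1 := by
  classical
  refine ⟨Stmt5Aux.gfun h, Stmt5Aux.computable_gfun h hcomp, Stmt5Aux.gfun_injective h, ?_⟩
  have hblock : ∀ k : ℕ, 2 ≤ k → h k = f k →
      1 - 1 / (k : ℝ) ≤ pden (Stmt5Aux.gfun h ⁻¹' A) k.factorial := by
    intro k hk hag
    obtain ⟨n, rfl⟩ : ∃ n, k = n + 1 := ⟨k - 1, by omega⟩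
    have hn : 1 ≤ n := by omega
    have hsub : Set.Ico n.factorial ((n + 1).factorial) ⊆ Stmt5Aux.gfun h ⁻¹' A := by
      intro m hm
      exact Stmt5Aux.gfun_mem A hinf h hn hm.1 hm.2 (by rw [hag, hf (n + 1)])
    have hle : n.factorial ≤ (n + 1).factorial := Nat.factorial_le (by omega)
    have hpos : 0 < (n + 1).factorial := Nat.factorial_pos _
    have := Stmt5Aux.pden_ge _ hle hpos hsub
    have hfr : ((n.factorial : ℝ)) / ((n + 1).factorial : ℝ) = 1 / ((n : ℝ) + 1) := by
      rw [Nat.factorial_succ]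
      have hne : (n.factorial : ℝ) ≠ 0 := by
        exact_mod_cast (Nat.factorial_pos n).ne'
      push_cast
      field_simp
    rw [hfr] at this
    convert this using 2
    push_cast
    ring
  have hfreq : ∃ᶠ n : ℕ in atTop,
      pden (Stmt5Aux.gfun h ⁻¹' A) n.factorial ≥ 1 - 1 / (n : ℝ) := by
    rw [frequently_atTop] at hagree ⊢
    intro N
    obtain ⟨k, hk, hkeq⟩ := hagree (max N 2)
    exact ⟨k, le_trans (le_max_left _ _) hk,
      hblock k (le_trans (le_max_right _ _) hk) hkeq⟩
  refine ⟨hfreq, ?_⟩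
  set u := fun n => pden (Stmt5Aux.gfun h ⁻¹' A) n with hu
  have hbd : IsBoundedUnder (· ≤ ·) atTop u :=
    isBoundedUnder_of ⟨1, fun n => Stmt5Aux.pden_le_one _ n⟩
  have hbd2 : IsBoundedUnder (· ≥ ·) atTop u :=
    isBoundedUnder_of ⟨0, fun n => Stmt5Aux.pden_nonneg _ n⟩
  apply le_antisymm
  · exact limsup_le_of_le hbd2.isCoboundedUnder_le
      (Eventually.of_forall fun n => Stmt5Aux.pden_le_one _ n)
  · refine le_of_forall_lt fun c hc => ?_
    have hc' : c < (c + 1) / 2 := by linarith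
    have hc1 : (c + 1) / 2 < 1 := by linarith
    refine lt_of_lt_of_le hc' (Filter.le_limsup_of_frequently_le ?_ hbd)
    obtain ⟨n₀, hn₀⟩ := exists_nat_one_div_lt (ε := 1 - (c + 1) / 2) (by linarith)
    rw [frequently_atTop] at hfreq ⊢
    intro N
    obtain ⟨k, hk, hkest⟩ := hfreq (max N (n₀ + 1))
    have hkn : (n₀ : ℕ) + 1 ≤ k := le_trans (le_max_right _ _) hk
    have hkN : N ≤ k := le_trans (le_max_left _ _) hk
    refine ⟨k.factorial, le_trans hkN (Nat.self_le_factorial k), ?_⟩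
    have hkpos : (0 : ℝ) < (n₀ : ℝ) + 1 := by positivity
    have h1k : 1 / (k : ℝ) ≤ 1 / ((n₀ : ℝ) + 1) := by
      apply one_div_le_one_div_of_le hkpos
      exact_mod_cast hkn
    have : (c + 1) / 2 ≤ 1 - 1 / (k : ℝ) := by linarith
    exact le_trans this hkest
end

section
/- Let f : ℕ → ℕ and suppose there is no computable function g : ℕ → Finset ℕ such that |g(n)| ≤ n² for all n and f(n) ∈ g(n) for infinitely many n. Then the graph G_f = { ⟨n, f(n)⟩ : n ∈ ℕ } (where ⟨·,·⟩ is the standard computable pairing function on ℕ) has intrinsic density 0: for every computable injection p : ℕ → ℕ, lim_{n→∞} ρ_n(p⁻¹(G_f)) = 0. -/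
open Filter

namespace Stmt8Aux

open Encodable Denumerable

/-- Insert into a strictly sorted list, keeping it strictly sorted. -/
def insertS (a : ℕ) : List ℕ → List ℕ
  | [] => [a]
  | b :: l => if a < b then a :: b :: l else if a = b then b :: l else b :: insertS a l

theorem mem_insertS (a x : ℕ) : ∀ l : List ℕ, (x ∈ insertS a l ↔ x = a ∨ x ∈ l)
  | [] => by simp [insertS]
  | b :: l => by
    simp only [insertS]
    split_ifs with h1 h2
    · simp [List.mem_cons]
    · subst h2; simp [List.mem_cons]
    · simp [List.mem_cons, mem_insertS a x l]; tauto

theorem length_insertS (a : ℕ) : ∀ l : List ℕ, (insertS a l).length ≤ l.length + 1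
  | [] => by simp [insertS]
  | b :: l => by
    simp only [insertS]
    split_ifs with h1 h2
    · simp
    · simp
    · have := length_insertS a l
      simp only [List.length_cons]
      omega

theorem sorted_insertS (a : ℕ) : ∀ {l : List ℕ}, l.Pairwise (· < ·) → (insertS a l).Pairwise (· < ·)
  | [], _ => by simp [insertS]
  | b :: l, h => by
    rw [List.pairwise_cons] at h
    obtain ⟨hb, hl⟩ := h
    simp only [insertS]
    split_ifs with h1 h2
    · refine List.pairwise_cons.2 ⟨?_, List.pairwise_cons.2 ⟨hb, hl⟩⟩
      intro y hy
      rcases List.mem_cons.1 hy with rfl | hy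
      · exact h1
      · exact h1.trans (hb _ hy)
    · exact List.pairwise_cons.2 ⟨hb, hl⟩
    · refine List.pairwise_cons.2 ⟨?_, sorted_insertS a hl⟩
      intro y hy
      rcases (mem_insertS a y l).1 hy with rfl | hy
      · omega
      · exact hb _ hy

theorem insertS_eq_rec (a : ℕ) : ∀ l : List ℕ, insertS a l =
    List.rec (motive := fun _ => List ℕ) [a]
      (fun b l IH => if a < b then a :: b :: l else if a = b then b :: l else b :: IH) l
  | [] => rfl
  | b :: l => by
    have IH := insertS_eq_rec a l
    simp only [insertS]
    rw [IH]

theorem insertS_primrec : Primrec₂ insertS := by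
  have h : Primrec fun x : ℕ × List ℕ =>
      List.rec (motive := fun _ => List ℕ) [x.1]
        (fun b l IH => if x.1 < b then x.1 :: b :: l else if x.1 = b then b :: l else b :: IH)
        x.2 := by
    refine Primrec.list_rec (f := fun x : ℕ × List ℕ => x.2) (g := fun x => [x.1])
      (h := fun x q => if x.1 < q.1 then x.1 :: q.1 :: q.2.1
        else if x.1 = q.1 then q.1 :: q.2.1 else q.1 :: q.2.2)
      Primrec.snd (Primrec.list_cons.comp Primrec.fst (Primrec.const [])) ?_
    have a : Primrec fun q : (ℕ × List ℕ) × ℕ × List ℕ × List ℕ => q.1.1 :=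
      Primrec.fst.comp Primrec.fst
    have b : Primrec fun q : (ℕ × List ℕ) × ℕ × List ℕ × List ℕ => q.2.1 :=
      Primrec.fst.comp Primrec.snd
    have l : Primrec fun q : (ℕ × List ℕ) × ℕ × List ℕ × List ℕ => q.2.2.1 :=
      Primrec.fst.comp (Primrec.snd.comp Primrec.snd)
    have ih : Primrec fun q : (ℕ × List ℕ) × ℕ × List ℕ × List ℕ => q.2.2.2 :=
      Primrec.snd.comp (Primrec.snd.comp Primrec.snd)
    exact Primrec.ite (Primrec.nat_lt.comp a b)
      (Primrec.list_cons.comp a (Primrec.list_cons.comp b l))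
      (Primrec.ite (Primrec.eq.comp a b) (Primrec.list_cons.comp b l)
        (Primrec.list_cons.comp b ih))
  exact h.of_eq fun x => (insertS_eq_rec x.1 x.2).symm

/-- The (sorted) list of values `(p k).unpair.2` for `k < j`. -/
def build (p : ℕ → ℕ) : ℕ → List ℕ
  | 0 => []
  | j + 1 => insertS ((p j).unpair.2) (build p j)

theorem sorted_build (p : ℕ → ℕ) : ∀ j, (build p j).Pairwise (· < ·)
  | 0 => List.Pairwise.nil
  | j + 1 => sorted_insertS _ (sorted_build p j)

theorem length_build (p : ℕ → ℕ) : ∀ j, (build p j).length ≤ j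
  | 0 => le_refl _
  | j + 1 => le_trans (length_insertS _ _) (Nat.succ_le_succ (length_build p j))

theorem mem_build (p : ℕ → ℕ) (x : ℕ) : ∀ j, (x ∈ build p j ↔ ∃ k < j, (p k).unpair.2 = x)
  | 0 => by simp [build]
  | j + 1 => by
    rw [build, mem_insertS, mem_build p x j]
    constructor
    · rintro (rfl | ⟨k, hk, rfl⟩)
      · exact ⟨j, Nat.lt_succ_self j, rfl⟩
      · exact ⟨k, hk.trans (Nat.lt_succ_self j), rfl⟩
    · rintro ⟨k, hk, rfl⟩
      rcases Nat.lt_succ_iff_lt_or_eq.1 hk with h | rfl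
      · exact Or.inr ⟨k, h, rfl⟩
      · exact Or.inl rfl

theorem build_eq_rec (p : ℕ → ℕ) : ∀ j, build p j =
    Nat.rec (motive := fun _ => List ℕ) [] (fun k IH => insertS ((p k).unpair.2) IH) j
  | 0 => rfl
  | j + 1 => by
    have IH := build_eq_rec p j
    rw [build, IH]

theorem build_comp {p : ℕ → ℕ} (hp : Computable p) : Computable fun n => build p (n ^ 2) := by
  have h : Computable fun n : ℕ =>
      Nat.rec (motive := fun _ => List ℕ) [] (fun k IH => insertS ((p k).unpair.2) IH) (n ^ 2) := by
    refine Computable.nat_rec (f := fun n : ℕ => n ^ 2) (g := fun _ : ℕ => ([] : List ℕ))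
      (h := fun _ q => insertS ((p q.1).unpair.2) q.2) ?_ (Computable.const _) ?_
    · exact (Primrec.nat_mul.comp Primrec.id Primrec.id).to_comp.of_eq fun n => (pow_two n).symm
    · exact insertS_primrec.to_comp.comp
        ((Primrec.snd.comp Primrec.unpair).to_comp.comp (hp.comp (Computable.fst.comp Computable.snd)))
        (Computable.snd.comp Computable.snd)
  exact h.of_eq fun n => (build_eq_rec p (n ^ 2)).symm

def lowStep : Option ℕ × List ℕ → ℕ → Option ℕ × List ℕ := fun s a =>
  (some a, Option.casesOn s.1 [a] fun b => s.2 ++ [a - b - 1])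

def lowAux (l : List ℕ) : List ℕ := (l.foldl lowStep ((none : Option ℕ), ([] : List ℕ))).2

theorem foldl_lowStep : ∀ (l : List ℕ) (b : ℕ) (acc : List ℕ),
    (l.foldl lowStep (some b, acc)).2 = acc ++ Denumerable.lower' l (b + 1)
  | [], b, acc => by simp [Denumerable.lower']
  | a :: l, b, acc => by
    rw [List.foldl_cons]
    show (l.foldl lowStep (some a, acc ++ [a - b - 1])).2 = _
    rw [foldl_lowStep l a (acc ++ [a - b - 1])]
    simp [Denumerable.lower', Nat.sub_sub, List.append_assoc]

theorem lowAux_eq : ∀ l : List ℕ, lowAux l = Denumerable.lower' l 0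
  | [] => rfl
  | a :: l => by
    show (l.foldl lowStep (some a, [a])).2 = _
    rw [foldl_lowStep l a [a]]
    simp [Denumerable.lower']

theorem lowAux_primrec : Primrec lowAux := by
  have h : Primrec fun l : List ℕ =>
      l.foldl (fun s b => lowStep s b) ((none : Option ℕ), ([] : List ℕ)) := by
    refine Primrec.list_foldl (f := @id (List ℕ))
      (g := fun _ => ((none : Option ℕ), ([] : List ℕ)))
      (h := fun _ q => lowStep q.1 q.2) Primrec.id (Primrec.const _) ?_
    have o : Primrec fun q : List ℕ × (Option ℕ × List ℕ) × ℕ => q.2.1.1 :=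
      Primrec.fst.comp (Primrec.fst.comp Primrec.snd)
    have acc : Primrec fun q : List ℕ × (Option ℕ × List ℕ) × ℕ => q.2.1.2 :=
      Primrec.snd.comp (Primrec.fst.comp Primrec.snd)
    have a : Primrec fun q : List ℕ × (Option ℕ × List ℕ) × ℕ => q.2.2 :=
      Primrec.snd.comp Primrec.snd
    refine Primrec.pair (Primrec.option_some.comp a) ?_
    refine Primrec.option_casesOn o (Primrec.list_cons.comp a (Primrec.const [])) ?_
    exact Primrec.list_append.comp (acc.comp Primrec.fst)
      (Primrec.list_cons.comp
        (Primrec.nat_sub.comp (Primrec.nat_sub.comp (a.comp Primrec.fst) Primrec.snd)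
          (Primrec.const 1))
        (Primrec.const []))
  exact (Primrec.snd.comp h).of_eq fun l => rfl

/-- The trace set. -/
def trace (p : ℕ → ℕ) (n : ℕ) : Finset ℕ :=
  Denumerable.ofNat (Finset ℕ) (Encodable.encode (lowAux (build p (n ^ 2))))

theorem trace_comp {p : ℕ → ℕ} (hp : Computable p) : Computable (trace p) :=
  (Computable.ofNat (Finset ℕ)).comp
    (Computable.encode.comp (lowAux_primrec.to_comp.comp (build_comp hp)))

theorem ofNat_finset_eq (m : ℕ) : Denumerable.ofNat (Finset ℕ) m =
    Finset.map (Denumerable.eqv ℕ).symm.toEmbedding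
      (Denumerable.raise'Finset (Denumerable.ofNat (List ℕ) m) 0) :=
  Denumerable.ofNat_of_decode rfl

theorem length_raise' : ∀ (l : List ℕ) (n : ℕ), (Denumerable.raise' l n).length = l.length
  | [], _ => rfl
  | a :: l, n => by simp [Denumerable.raise', length_raise' l]

theorem mem_ofNat_finset {L : List ℕ} (h : L.Pairwise (· < ·)) (x : ℕ) :
    x ∈ Denumerable.ofNat (Finset ℕ) (Encodable.encode (Denumerable.lower' L 0)) ↔ x ∈ L := by
  rw [ofNat_finset_eq, Denumerable.ofNat_encode]
  simp [Finset.mem_map, Denumerable.raise'Finset,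
    Denumerable.raise_lower' (fun m _ => Nat.zero_le m) h.sortedLT, Denumerable.eqv]

theorem length_lower' : ∀ (l : List ℕ) (n : ℕ), (Denumerable.lower' l n).length = l.length
  | [], _ => rfl
  | a :: l, n => by simp [Denumerable.lower', length_lower' l]

theorem card_ofNat_finset (L : List ℕ) :
    (Denumerable.ofNat (Finset ℕ) (Encodable.encode (Denumerable.lower' L 0))).card
      ≤ L.length := by
  rw [ofNat_finset_eq, Denumerable.ofNat_encode, Finset.card_map]
  have h : (Denumerable.raise'Finset (Denumerable.lower' L 0) 0).card = L.length := by
    show (Denumerable.raise' (Denumerable.lower' L 0) 0).length = L.length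
    rw [length_raise', length_lower']
  exact le_of_eq h

theorem trace_eq (p : ℕ → ℕ) (n : ℕ) : trace p n =
    Denumerable.ofNat (Finset ℕ) (Encodable.encode (Denumerable.lower' (build p (n ^ 2)) 0)) := by
  rw [trace, lowAux_eq]

theorem card_trace (p : ℕ → ℕ) (n : ℕ) : (trace p n).card ≤ n ^ 2 := by
  rw [trace_eq]
  exact (card_ofNat_finset _).trans (length_build p (n ^ 2))

theorem mem_trace (p : ℕ → ℕ) (n x : ℕ) :
    x ∈ trace p n ↔ ∃ k < n ^ 2, (p k).unpair.2 = x := by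
  rw [trace_eq, mem_ofNat_finset (sorted_build p _), mem_build]

theorem exists_big (s : Finset ℕ) (hs : s.Nonempty) : ∃ m ∈ s, s.card ≤ m + 1 := by
  obtain ⟨m, hm, hmax⟩ := s.exists_max_image id hs
  refine ⟨m, hm, ?_⟩
  have hsub : s ⊆ Finset.range (m + 1) := fun x hx =>
    Finset.mem_range.2 (Nat.lt_succ_of_le (hmax x hx))
  simpa using Finset.card_le_card hsub

end Stmt8Aux


theorem stmt8 (f : ℕ → ℕ)
    (hf : ¬ ∃ g : ℕ → Finset ℕ, Computable g ∧ (∀ n, (g n).card ≤ n ^ 2) ∧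
      ∃ᶠ n in atTop, f n ∈ g n) :
    ID0 {m : ℕ | ∃ n : ℕ, m = Nat.pair n (f n)} := by
  intro p hp hpinj
  by_contra hT
  apply hf
  refine ⟨Stmt8Aux.trace p, Stmt8Aux.trace_comp hp, Stmt8Aux.card_trace p, ?_⟩
  set S : Set ℕ := {m : ℕ | ∃ n : ℕ, m = Nat.pair n (f n)} with hS
  rw [Metric.tendsto_atTop] at hT
  push_neg at hT
  obtain ⟨ε, hε, hfreq⟩ := hT
  refine Filter.frequently_atTop.2 fun N => ?_
  obtain ⟨n₀, hn₀⟩ := exists_nat_ge (max ((N + 2) / ε) (max (2 / ε) (4 / (ε * ε))))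
  obtain ⟨n, hn, hdist⟩ := hfreq (max n₀ 1)
  have hn1 : 1 ≤ n := le_trans (le_max_right _ _) hn
  have hnn0 : (n₀ : ℝ) ≤ n := by exact_mod_cast le_trans (le_max_left _ _) hn
  have hnR : (0 : ℝ) < n := by exact_mod_cast hn1
  -- numeric bounds on n
  have hb1 : (N : ℝ) + 2 ≤ ε * n := by
    have h1 : (N + 2) / ε ≤ (n : ℝ) := le_trans (le_trans (le_max_left _ _) hn₀) hnn0
    rw [div_le_iff₀ hε] at h1
    linarith [h1]
  have hb2 : 2 ≤ ε * n := by
    have h1 : 2 / ε ≤ (n : ℝ) :=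
      le_trans (le_trans (le_trans (le_max_left _ _) (le_max_right _ _)) hn₀) hnn0
    rw [div_le_iff₀ hε] at h1
    linarith [h1]
  have hb3 : 4 ≤ ε * ε * n := by
    have h1 : 4 / (ε * ε) ≤ (n : ℝ) :=
      le_trans (le_trans (le_trans (le_max_right _ _) (le_max_right _ _)) hn₀) hnn0
    rw [div_le_iff₀ (by positivity)] at h1
    linarith [h1]
  -- density bound
  have hpos : 0 ≤ pden (p ⁻¹' S) n := by
    unfold pden
    positivity
  have hged : ε ≤ pden (p ⁻¹' S) n := by
    rwa [Real.dist_eq, sub_zero, abs_of_nonneg hpos] at hdist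
  have hTfin : ((p ⁻¹' S) ∩ Set.Iio n).Finite :=
    Set.Finite.inter_of_right (Set.finite_Iio n) _
  set c : ℕ := ((p ⁻¹' S) ∩ Set.Iio n).ncard with hcdef
  have hc : ε * n ≤ c := by
    rw [pden, le_div_iff₀ hnR] at hged
    exact hged
  -- image under first coordinate
  have himg : ∀ k ∈ hTfin.toFinset, p k = Nat.pair ((p k).unpair.1) (f ((p k).unpair.1)) := by
    intro k hk
    rw [Set.Finite.mem_toFinset] at hk
    obtain ⟨a, ha⟩ := hk.1
    rw [ha, Nat.unpair_pair]
  have hinjOn : Set.InjOn (fun k => (p k).unpair.1) hTfin.toFinset := by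
    intro k1 h1 k2 h2 he
    apply hpinj
    rw [himg k1 h1, himg k2 h2]
    simp only at he
    rw [he]
  set F : Finset ℕ := hTfin.toFinset.image (fun k => (p k).unpair.1) with hFdef
  have hcard : F.card = c := by
    rw [hFdef, Finset.card_image_of_injOn hinjOn, hcdef, Set.ncard_eq_toFinset_card _ hTfin]
  have hcpos : 0 < c := by
    have : (0 : ℝ) < c := lt_of_lt_of_le (by positivity) hc
    exact_mod_cast this
  have hFne : F.Nonempty := Finset.card_pos.1 (by rw [hcard]; exact hcpos)
  obtain ⟨m, hmF, hmge⟩ := Stmt8Aux.exists_big F hFne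
  rw [Finset.mem_image] at hmF
  obtain ⟨k, hk, hkm⟩ := hmF
  have hpk : p k = Nat.pair m (f m) := by
    rw [← hkm]
    exact himg k hk
  have hklt : k < n := ((Set.Finite.mem_toFinset _).1 hk).2
  -- m is large
  have hm1 : (c : ℝ) ≤ m + 1 := by
    have := hmge
    rw [hcard] at this
    exact_mod_cast this
  have hmge' : ε * n - 1 ≤ (m : ℝ) := by linarith [hc, hm1]
  have hmN : N ≤ m := by
    have : (N : ℝ) ≤ m := by linarith
    exact_mod_cast this
  have hkm2 : k < m ^ 2 := by
    have hhalf : ε * n / 2 ≤ (m : ℝ) := by linarith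
    have hnm : (n : ℝ) ≤ (m : ℝ) ^ 2 := by
      nlinarith [sq_nonneg ((m : ℝ) - ε * n / 2), hnR, hb2, hb3]
    have : (k : ℝ) < ((m ^ 2 : ℕ) : ℝ) := by
      push_cast
      calc (k : ℝ) < n := by exact_mod_cast hklt
        _ ≤ _ := hnm
    exact_mod_cast this
  refine ⟨m, hmN, ?_⟩
  rw [Stmt8Aux.mem_trace]
  exact ⟨k, hkm2, by rw [hpk, Nat.unpair_pair]⟩
end

section
/- A set S ⊆ ℕ has density 0 image under every computable permutation if and only if it has density 0 preimage under every computable injection: lim_{n→∞} ρ_n(π(S)) = 0 for every computable permutation π of ℕ if and only if lim_{n→∞} ρ_n(p⁻¹(S)) = 0 for every computable injection p : ℕ → ℕ. -/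
open Filter

namespace Stmt16Aux

/-- Boolean "not a member" predicate. -/
def notMem (l : List ℕ) (v : ℕ) : Bool := decide (v ∉ l)

lemma primrec_notMem : Primrec₂ notMem := by
  have h : Primrec₂ fun (l : List ℕ) (v : ℕ) => decide (l.length ≤ l.idxOf v) :=
    PrimrecPred.decide (Primrec.nat_le.comp (Primrec.list_length.comp Primrec.fst)
      (Primrec.list_idxOf.comp Primrec.snd Primrec.fst))
  refine h.of_eq fun l v => ?_
  simp only [notMem, decide_eq_decide]
  constructor
  · intro hle hmem
    exact absurd (List.idxOf_lt_length_iff.2 hmem) (not_lt.2 hle)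
  · intro hv
    by_contra hlt
    exact hv (List.idxOf_lt_length_iff.1 (lt_of_not_ge hlt))

/-- Pigeonhole: for an injective `f`, some `f k` with `k ≤ l.length` is not in `l`. -/
lemma exists_not_mem (f : ℕ → ℕ) (hf : Function.Injective f) (l : List ℕ) :
    ∃ k ≤ l.length, f k ∉ l := by
  by_contra h
  push_neg at h
  have hsub : (Finset.range (l.length + 1)).image f ⊆ l.toFinset := by
    intro x hx
    rcases Finset.mem_image.1 hx with ⟨k, hk, rfl⟩
    exact List.mem_toFinset.2 (h k (Nat.lt_succ_iff.1 (Finset.mem_range.1 hk)))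
  have := Finset.card_le_card hsub
  rw [Finset.card_image_of_injective _ hf, Finset.card_range] at this
  exact absurd (this.trans (List.toFinset_card_le l)) (by omega)

/-- The next element to append to the list `l`. -/
def nxt (p : ℕ → ℕ) (l : List ℕ) : ℕ :=
  if l.length % 2 = 0 then
    p (((List.range (l.length + 1)).map p).findIdx (notMem l))
  else (List.range (l.length + 1)).findIdx (notMem l)

lemma findIdx_even_lt {p : ℕ → ℕ} (hp : Function.Injective p) (l : List ℕ) :
    ((List.range (l.length + 1)).map p).findIdx (notMem l) < l.length + 1 := by
  obtain ⟨k, hk, hkl⟩ := exists_not_mem p hp l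
  have h : ((List.range (l.length + 1)).map p).findIdx (notMem l)
      < ((List.range (l.length + 1)).map p).length := by
    apply List.findIdx_lt_length_of_exists
    refine ⟨p k, List.mem_map_of_mem (f := p) ?_, by simpa [notMem] using hkl⟩
    simp only [List.mem_range]
    omega
  simpa using h

lemma findIdx_odd_lt (l : List ℕ) :
    (List.range (l.length + 1)).findIdx (notMem l) < l.length + 1 := by
  obtain ⟨k, hk, hkl⟩ := exists_not_mem id Function.injective_id l
  have h : (List.range (l.length + 1)).findIdx (notMem l)
      < (List.range (l.length + 1)).length := by
    apply List.findIdx_lt_length_of_exists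
    refine ⟨k, ?_, by simpa [notMem] using hkl⟩
    simp only [List.mem_range]
    omega
  simpa using h

lemma nxt_not_mem {p : ℕ → ℕ} (hp : Function.Injective p) (l : List ℕ) : nxt p l ∉ l := by
  unfold nxt
  split_ifs with h
  · have hlt : ((List.range (l.length + 1)).map p).findIdx (notMem l)
        < ((List.range (l.length + 1)).map p).length := by
      simpa using findIdx_even_lt hp l
    have hfa := List.findIdx_getElem (w := hlt)
    rw [List.getElem_map, List.getElem_range] at hfa
    simpa [notMem] using hfa
  · have hlt : (List.range (l.length + 1)).findIdx (notMem l)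
        < (List.range (l.length + 1)).length := by
      simpa using findIdx_odd_lt l
    have hfa := List.findIdx_getElem (w := hlt)
    rw [List.getElem_range] at hfa
    simpa [notMem] using hfa

/-- On even stages, if `p j` is the first value of `p` missing from `l`, it is appended. -/
lemma nxt_even_eq {p : ℕ → ℕ} (l : List ℕ) (hlen : l.length % 2 = 0) (j : ℕ)
    (hj : j ≤ l.length) (hmem : p j ∉ l) (hprev : ∀ i < j, p i ∈ l) : nxt p l = p j := by
  unfold nxt
  rw [if_pos hlen]
  congr 1
  have hjL : j < ((List.range (l.length + 1)).map p).length := by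
    simp only [List.length_map, List.length_range]
    omega
  rw [List.findIdx_eq hjL]
  refine ⟨?_, ?_⟩
  · rw [List.getElem_map, List.getElem_range]
    simpa [notMem] using hmem
  · intro i hij
    rw [List.getElem_map, List.getElem_range]
    simpa [notMem] using hprev i hij

/-- On odd stages, the appended value is at most any value missing from `l`. -/
lemma nxt_odd_le {p : ℕ → ℕ} (l : List ℕ) (hlen : l.length % 2 = 1) (m : ℕ) (hm : m ∉ l) :
    nxt p l ≤ m := by
  unfold nxt
  rw [if_neg (by omega)]
  by_cases hcase : m ≤ l.length
  · by_contra hgt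
    push_neg at hgt
    have hfa := List.not_of_lt_findIdx (xs := List.range (l.length + 1))
      (p := notMem l) (i := m) hgt
    rw [List.getElem_range] at hfa
    simp [notMem, hm] at hfa
  · have h := List.findIdx_le_length (p := notMem l) (xs := List.range (l.length + 1))
    simp only [List.length_range] at h
    omega

/-- The list of the first `t` values of the permutation built from `p`. -/
def Lp (p : ℕ → ℕ) : ℕ → List ℕ
  | 0 => []
  | t + 1 => Lp p t ++ [nxt p (Lp p t)]

/-- The permutation built from the injection `p`. -/
def sig (p : ℕ → ℕ) (t : ℕ) : ℕ := nxt p (Lp p t)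

lemma length_Lp (p : ℕ → ℕ) : ∀ t, (Lp p t).length = t
  | 0 => rfl
  | t + 1 => by simp [Lp, length_Lp p t]

lemma mem_Lp_mono (p : ℕ → ℕ) {s t : ℕ} (h : s ≤ t) {m : ℕ} (hm : m ∈ Lp p s) :
    m ∈ Lp p t := by
  induction t with
  | zero => simpa [Nat.le_zero.1 h] using hm
  | succ t ih =>
    rcases Nat.lt_or_ge s (t + 1) with h' | h'
    · exact List.mem_append_left _ (ih (Nat.lt_succ_iff.1 h'))
    · have : s = t + 1 := le_antisymm h h'
      simpa [this] using hm

lemma mem_Lp_iff (p : ℕ → ℕ) {t m : ℕ} : m ∈ Lp p t ↔ ∃ s < t, sig p s = m := by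
  induction t with
  | zero => simp [Lp]
  | succ t ih =>
    simp only [Lp, List.mem_append, List.mem_singleton, ih]
    constructor
    · rintro (⟨s, hs, rfl⟩ | h)
      · exact ⟨s, by omega, rfl⟩
      · exact ⟨t, by omega, h.symm⟩
    · rintro ⟨s, hs, rfl⟩
      rcases Nat.lt_or_ge s t with h' | h'
      · exact Or.inl ⟨s, h', rfl⟩
      · have hst : s = t := by omega
        exact Or.inr (by subst hst; rfl)

lemma sig_not_mem {p : ℕ → ℕ} (hp : Function.Injective p) (t : ℕ) :
    sig p t ∉ Lp p t := nxt_not_mem hp _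

lemma sig_injective {p : ℕ → ℕ} (hp : Function.Injective p) :
    Function.Injective (sig p) := by
  intro s t hst
  by_contra hne
  wlog h : s < t generalizing s t
  · exact this hst.symm (Ne.symm hne) (by omega)
  have hmem : sig p s ∈ Lp p t :=
    mem_Lp_mono p h ((mem_Lp_iff p).2 ⟨s, Nat.lt_succ_self s, rfl⟩)
  rw [hst] at hmem
  exact sig_not_mem hp t hmem

lemma cover {p : ℕ → ℕ} (hp : Function.Injective p) (k : ℕ) :
    ∀ i ≤ k, p i ∈ Lp p (2 * k + 1) := by
  induction k with
  | zero =>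
    intro i hi
    interval_cases i
    have h0 : nxt p (Lp p 0) = p 0 :=
      nxt_even_eq (Lp p 0) (by simp [Lp]) 0 (by simp [Lp]) (by simp [Lp]) (by omega)
    show p 0 ∈ Lp p 1
    rw [show Lp p 1 = Lp p 0 ++ [nxt p (Lp p 0)] from rfl, h0]
    simp
  | succ k ih =>
    intro i hi
    have hLp : Lp p (2 * (k + 1) + 1) = Lp p (2 * (k + 1)) ++ [nxt p (Lp p (2 * (k + 1)))] :=
      rfl
    rcases Nat.lt_or_ge i (k + 1) with h' | h'
    · exact mem_Lp_mono p (by omega) (ih i (by omega))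
    · have hik : i = k + 1 := by omega
      subst hik
      by_cases hin : p (k + 1) ∈ Lp p (2 * (k + 1))
      · rw [hLp]
        exact List.mem_append_left _ hin
      · have hlength : (Lp p (2 * (k + 1))).length = 2 * (k + 1) := length_Lp p _
        have hnxt : nxt p (Lp p (2 * (k + 1))) = p (k + 1) := by
          apply nxt_even_eq _ (by omega) (k + 1) (by omega) hin
          intro i hik2
          exact mem_Lp_mono p (by omega) (ih i (by omega))
        rw [hLp, hnxt]
        exact List.mem_append_right _ (List.mem_singleton.2 rfl)

lemma sig_surjective {p : ℕ → ℕ} (hp : Function.Injective p) :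
    Function.Surjective (sig p) := by
  intro m
  by_contra hm
  push_neg at hm
  have hnot : ∀ t, m ∉ Lp p t := by
    intro t ht
    obtain ⟨s, _, hs⟩ := (mem_Lp_iff p).1 ht
    exact hm s hs
  have hle : ∀ j, sig p (2 * j + 1) ≤ m := by
    intro j
    have hlength : (Lp p (2 * j + 1)).length = 2 * j + 1 := length_Lp p _
    exact nxt_odd_le (Lp p (2 * j + 1)) (by omega) m (hnot _)
  have hcard : (Finset.range (m + 2)).card ≤ (Finset.Iic m).card := by
    apply Finset.card_le_card_of_injOn (fun j => sig p (2 * j + 1))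
    · intro j _
      exact Finset.mem_Iic.2 (hle j)
    · intro a _ b _ hab
      have := sig_injective hp hab
      omega
  simp [Nat.card_Iic] at hcard

/-- Key cardinality bound: an initial chunk of `p⁻¹ S` embeds into a double-size
initial chunk of `sig p ⁻¹ S`. -/
lemma card_key {p : ℕ → ℕ} (hp : Function.Injective p) (S : Set ℕ) (n : ℕ) :
    ((p ⁻¹' S) ∩ Set.Iio n).ncard ≤ ((sig p ⁻¹' S) ∩ Set.Iio (2 * n)).ncard := by
  have hexists : ∀ k : ℕ, ∃ t, t < 2 * k + 1 ∧ sig p t = p k := by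
    intro k
    obtain ⟨t, ht, hts⟩ := (mem_Lp_iff p).1 (cover hp k k le_rfl)
    exact ⟨t, ht, hts⟩
  classical
  set τ : ℕ → ℕ := fun k => Classical.choose (hexists k) with hτ
  have hτspec : ∀ k, τ k < 2 * k + 1 ∧ sig p (τ k) = p k := fun k =>
    Classical.choose_spec (hexists k)
  apply Set.ncard_le_ncard_of_injOn τ
  · rintro k ⟨hkS, hkn⟩
    refine ⟨?_, ?_⟩
    · show sig p (τ k) ∈ S
      rw [(hτspec k).2]
      exact hkS
    · have := (hτspec k).1
      simp only [Set.mem_Iio] at hkn ⊢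
      omega
  · intro a _ b _ hab
    have : p a = p b := by
      rw [← (hτspec a).2, ← (hτspec b).2, hab]
    exact hp this

lemma computable_mapRange {p : ℕ → ℕ} (hp : Computable p) :
    Computable fun n => (List.range n).map p := by
  have hstep : Computable fun q : ℕ × (ℕ × List ℕ) => q.2.2 ++ [p q.2.1] :=
    Computable.list_concat.comp (Computable.snd.comp Computable.snd)
      (hp.comp (Computable.fst.comp Computable.snd))
  have h := Computable.nat_rec (f := @id ℕ) (g := fun _ : ℕ => ([] : List ℕ))
    (h := fun (_ : ℕ) (q : ℕ × List ℕ) => q.2 ++ [p q.1])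
    Computable.id (Computable.const _) hstep.to₂
  have key : ∀ n : ℕ, (Nat.rec ([] : List ℕ) (fun y IH => IH ++ [p y]) n : List ℕ)
      = (List.range n).map p := by
    intro n
    induction n with
    | zero => simp
    | succ n ih => simp [List.range_succ, ih]
  exact h.of_eq fun n => key n

lemma computable_nxt {p : ℕ → ℕ} (hp : Computable p) : Computable (nxt p) := by
  have hM : Computable fun l : List ℕ => (List.range (l.length + 1)).map p :=
    (computable_mapRange hp).comp
      (Primrec.to_comp (Primrec.succ.comp Primrec.list_length))
  have hF : Primrec fun q : List ℕ × List ℕ => q.2.findIdx (notMem q.1) :=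
    Primrec.list_findIdx (f := Prod.snd) (p := fun q v => notMem q.1 v) Primrec.snd
      (primrec_notMem.comp (Primrec.fst.comp Primrec.fst) Primrec.snd)
  have hfindE : Computable fun l : List ℕ =>
      ((List.range (l.length + 1)).map p).findIdx (notMem l) :=
    (hF.to_comp).comp (Computable.id.pair hM)
  have hfindO : Computable fun l : List ℕ =>
      (List.range (l.length + 1)).findIdx (notMem l) :=
    Primrec.to_comp (Primrec.list_findIdx
      (Primrec.list_range.comp (Primrec.succ.comp Primrec.list_length)) primrec_notMem)
  have hcond : Computable fun l : List ℕ => decide (l.length % 2 = 0) :=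
    Primrec.to_comp (PrimrecPred.decide (Primrec.eq.comp
      (Primrec.nat_mod.comp Primrec.list_length (Primrec.const 2)) (Primrec.const 0)))
  have h : Computable fun l : List ℕ =>
      bif decide (l.length % 2 = 0) then
        p (((List.range (l.length + 1)).map p).findIdx (notMem l))
      else (List.range (l.length + 1)).findIdx (notMem l) :=
    Computable.cond hcond (hp.comp hfindE) hfindO
  refine h.of_eq fun l => ?_
  by_cases hl : l.length % 2 = 0 <;> simp [nxt, hl]

lemma computable_Lp {p : ℕ → ℕ} (hp : Computable p) : Computable (Lp p) := by
  have hstep : Computable fun q : ℕ × (ℕ × List ℕ) => q.2.2 ++ [nxt p q.2.2] :=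
    Computable.list_concat.comp (Computable.snd.comp Computable.snd)
      ((computable_nxt hp).comp (Computable.snd.comp Computable.snd))
  have h := Computable.nat_rec (f := @id ℕ) (g := fun _ : ℕ => ([] : List ℕ))
    (h := fun (_ : ℕ) (q : ℕ × List ℕ) => q.2 ++ [nxt p q.2])
    Computable.id (Computable.const _) hstep.to₂
  have key : ∀ n : ℕ, (Nat.rec ([] : List ℕ) (fun _ IH => IH ++ [nxt p IH]) n : List ℕ)
      = Lp p n := by
    intro n
    induction n with
    | zero => rfl
    | succ n ih => simp [Lp, ih]
  exact h.of_eq fun n => key n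

lemma computable_sig {p : ℕ → ℕ} (hp : Computable p) : Computable (sig p) :=
  (computable_nxt hp).comp (computable_Lp hp)

/-- A computable surjection on ℕ has a computable right inverse. -/
lemma exists_computable_inverse {f : ℕ → ℕ} (hf : Computable f)
    (hsurj : Function.Surjective f) :
    ∃ g : ℕ → ℕ, Computable g ∧ ∀ n, f (g n) = n := by
  classical
  have hex : ∀ n, ∃ t, f t = n := hsurj
  refine ⟨fun n => Nat.find (hex n), ?_, fun n => Nat.find_spec (hex n)⟩
  have hpr : Partrec₂ fun (n t : ℕ) => (Part.some (decide (f t = n)) : Part Bool) := by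
    apply Computable₂.partrec₂
    exact (Primrec.eq.decide.to_comp).comp (hf.comp Computable.snd) Computable.fst
  have hF : Partrec fun n => Nat.rfind fun t => (Part.some (decide (f t = n)) : Part Bool) :=
    Partrec.rfind hpr
  apply Partrec.of_eq_tot hF
  intro n
  apply Nat.mem_rfind.2
  constructor
  · simp [Nat.find_spec (hex n)]
  · intro m hm
    simp [Nat.find_min (hex n) hm]

lemma pden_nonneg (S : Set ℕ) (n : ℕ) : 0 ≤ pden S n :=
  div_nonneg (Nat.cast_nonneg _) (Nat.cast_nonneg _)

lemma pden_le_two_mul {A B : Set ℕ}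
    (h : ∀ n, (A ∩ Set.Iio n).ncard ≤ (B ∩ Set.Iio (2 * n)).ncard) (n : ℕ) :
    pden A n ≤ 2 * pden B (2 * n) := by
  rcases Nat.eq_zero_or_pos n with rfl | hn
  · simp [pden]
  · have hcast : ((A ∩ Set.Iio n).ncard : ℝ) ≤ ((B ∩ Set.Iio (2 * n)).ncard : ℝ) := by
      exact_mod_cast h n
    have hnpos : (0 : ℝ) < n := by exact_mod_cast hn
    have hne : (n : ℝ) ≠ 0 := ne_of_gt hnpos
    unfold pden
    have hcmul : ((2 * n : ℕ) : ℝ) = 2 * (n : ℝ) := by push_cast; ring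
    rw [hcmul]
    have key : 2 * (((B ∩ Set.Iio (2 * n)).ncard : ℝ) / (2 * (n : ℝ)))
        = ((B ∩ Set.Iio (2 * n)).ncard : ℝ) / (n : ℝ) := by
      field_simp
    rw [key, div_le_div_iff₀ hnpos hnpos]
    exact mul_le_mul_of_nonneg_right hcast (le_of_lt hnpos)

end Stmt16Aux


theorem stmt16 (S : Set ℕ) :
    (∀ π : ℕ → ℕ, Computable π → Function.Bijective π →
      Tendsto (fun n => pden (π '' S) n) atTop (nhds 0)) ↔
    (∀ p : ℕ → ℕ, Computable p → Function.Injective p →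
      Tendsto (fun n => pden (p ⁻¹' S) n) atTop (nhds 0)) := by
  constructor
  · -- permutations ⇒ injections
    intro H p hp hinj
    obtain ⟨g, hg, hginv⟩ := Stmt16Aux.exists_computable_inverse
      (Stmt16Aux.computable_sig hp) (Stmt16Aux.sig_surjective hinj)
    have hgsig : ∀ t, g (Stmt16Aux.sig p t) = t := fun t =>
      Stmt16Aux.sig_injective hinj (hginv (Stmt16Aux.sig p t))
    have hgbij : Function.Bijective g := by
      constructor
      · intro a b hab
        have := congrArg (Stmt16Aux.sig p) hab
        rwa [hginv, hginv] at this
      · intro t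
        exact ⟨Stmt16Aux.sig p t, hgsig t⟩
    have himg : g '' S = Stmt16Aux.sig p ⁻¹' S := by
      ext m
      constructor
      · rintro ⟨s, hs, rfl⟩
        show Stmt16Aux.sig p (g s) ∈ S
        rwa [hginv]
      · intro hm
        exact ⟨Stmt16Aux.sig p m, hm, hgsig m⟩
    have hmain : Tendsto (fun n => pden (Stmt16Aux.sig p ⁻¹' S) n) atTop (nhds 0) := by
      have := H g hg hgbij
      rwa [himg] at this
    have h2n : Tendsto (fun n : ℕ => 2 * n) atTop atTop := by
      apply Filter.tendsto_atTop_mono _ Filter.tendsto_id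
      intro n
      simp only [id_eq]
      omega
    have hbound : Tendsto (fun n => 2 * pden (Stmt16Aux.sig p ⁻¹' S) (2 * n))
        atTop (nhds 0) := by
      have := (hmain.comp h2n).const_mul (2 : ℝ)
      simpa using this
    apply squeeze_zero' (Filter.Eventually.of_forall fun n => Stmt16Aux.pden_nonneg _ n)
      (Filter.Eventually.of_forall fun n => ?_) hbound
    exact Stmt16Aux.pden_le_two_mul (Stmt16Aux.card_key hinj S) n
  · -- injections ⇒ permutations
    intro H π hπ hbij
    obtain ⟨g, hg, hginv⟩ := Stmt16Aux.exists_computable_inverse hπ hbij.2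
    have hginj : Function.Injective g := by
      intro a b hab
      have := congrArg π hab
      rwa [hginv, hginv] at this
    have himg : g ⁻¹' S = π '' S := by
      ext m
      constructor
      · intro hm
        exact ⟨g m, hm, hginv m⟩
      · rintro ⟨s, hs, rfl⟩
        show g (π s) ∈ S
        have : π (g (π s)) = π s := hginv (π s)
        rwa [hbij.1 this]
    have := H g hg hginj
    rwa [himg] at this
end
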